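/- arXiv:1409.0453 — 9 statements merged into one kernel-verified Lean document; each statement's English description precedes it below -/
import Mathlib

section
/- Let $G$ be a finite subgroup of $\mathrm{GL}(L)$ for a lattice $L \cong \mathbb{Z}^n$, and let $D$ be the subgroup of $G$ generated by the diagonalizable reflections in $G$. Then $D$ is a normal subgroup of $G$ and $D$ is an elementary abelian $2$-group of rank equal to the number of diagonalizable reflections in $G$. -/
/-!
A diagonalizable reflection is `s = 1 - 2 Q` with `Q = v wᵀ`, `wᵀ v = 1`, a rank-one idempotent;
in particular `s ≡ 1 mod 2`. For two of them in the finite group `G`, `(s t)² ≡ 1 mod 4` has finite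
order, so it is `1` by Minkowski's lemma (an integral matrix `≡ 1 mod 4` of finite order is `1`),
and `s`, `t` commute. Commuting distinct reflections have orthogonal idempotents, so every
`t ≠ s` fixes the root `Q` of `s` while `s` negates it; hence `s ∉ ⟨S \ {s}⟩`. The reflections
therefore form a basis of the elementary abelian `2`-group they generate, and this group is normal
because conjugates of diagonalizable reflections are diagonalizable reflections.
-/

open Matrix

/-- The diagonal matrix `diag(-1,1,…,1)`. -/
noncomputable def diagReflMat (n : ℕ) : Matrix (Fin n) (Fin n) ℤ :=
  Matrix.diagonal fun i => if (i : ℕ) = 0 then -1 else 1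

/-- `x ∈ GLₙ(ℤ)` is a diagonalizable reflection: `1 - x` has rank `1` and `x` is conjugate
in `GLₙ(ℤ)` to `diag(-1,1,…,1)`. -/
noncomputable def IsDiagRefl (n : ℕ) (x : GL (Fin n) ℤ) : Prop :=
  Matrix.rank ((1 : Matrix (Fin n) (Fin n) ℤ) - (x : Matrix (Fin n) (Fin n) ℤ)) = 1 ∧
  ∃ t : GL (Fin n) ℤ,
    ((t * x * t⁻¹ : GL (Fin n) ℤ) : Matrix (Fin n) (Fin n) ℤ) = diagReflMat n

section Ring

variable {R : Type*} [Ring R]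

theorem exists_one_add_pow_eq (x : R) (m : ℕ) :
    ∃ y : R, (1 + x) ^ m = 1 + m • x + x ^ 2 * y := by
  induction m with
  | zero => exact ⟨0, by simp⟩
  | succ m ih =>
    obtain ⟨y, hy⟩ := ih
    refine ⟨m • 1 + y + y * x, ?_⟩
    rw [pow_succ, hy, succ_nsmul]
    simp only [add_mul, mul_add, smul_mul_assoc, mul_smul_comm, one_mul, mul_one, sq, mul_assoc]
    abel

theorem exists_one_add_four_nsmul_pow_eq (b : R) (m : ℕ) :
    ∃ b' : R, (1 + 4 • b) ^ m = 1 + 4 • b' := by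
  obtain ⟨y, hy⟩ := exists_one_add_pow_eq (4 • b) m
  exact ⟨m • b + 4 • (b ^ 2 * y), by rw [hy, smul_pow, smul_mul_assoc]; module⟩

variable [IsAddTorsionFree R]

theorem exists_eq_two_nsmul_of_one_add_pow_prime_eq_one {p k : ℕ} (hp : p.Prime) {b : R}
    (h : (1 + 2 ^ (k + 2) • b) ^ p = 1) : ∃ c, b = 2 • c := by
  obtain ⟨y, hy⟩ := exists_one_add_pow_eq (2 ^ (k + 2) • b) p
  rw [h, smul_pow, smul_mul_assoc] at hy
  set z := 2 ^ k • (b ^ 2 * y)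
  have hpb : p • b = -(4 • z) := by
    apply nsmul_right_injective (pow_ne_zero (k + 2) two_ne_zero : 2 ^ (k + 2) ≠ 0)
    linear_combination (norm := module) -hy
  rcases hp.eq_two_or_odd' with rfl | ⟨q, rfl⟩
  · exact ⟨-z, nsmul_right_injective two_ne_zero
      (show 2 • b = 2 • 2 • -z by linear_combination (norm := module) hpb)⟩
  · exact ⟨-(2 • z) - q • b, by linear_combination (norm := module) hpb⟩

theorem commute_of_commute_one_sub_two_nsmul {a b : R} (h : Commute (1 - 2 • a) (1 - 2 • b)) :
    Commute a b := by
  have h4 : 4 • (a * b) = 4 • (b * a) := by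
    have h' := h.eq
    simp only [sub_mul, mul_sub, one_mul, mul_one, smul_mul_assoc, mul_smul_comm] at h'
    linear_combination (norm := module) h'
  exact nsmul_right_injective (by norm_num) h4

end Ring

namespace Matrix

instance {m n R : Type*} [AddMonoid R] [IsAddTorsionFree R] : IsAddTorsionFree (Matrix m n R) :=
  inferInstanceAs (IsAddTorsionFree (m → n → R))

theorem eq_zero_of_forall_exists_eq_two_pow_nsmul {m n : Type*} {b : Matrix m n ℤ}
    (h : ∀ j : ℕ, ∃ c, b = 2 ^ j • c) : b = 0 := by
  ext i i'
  have hdvd : ∀ j : ℕ, (2 : ℤ) ^ j ∣ b i i' := fun j => by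
    obtain ⟨c, rfl⟩ := h j
    exact ⟨c i i', by simp⟩
  simpa [Int.finiteMultiplicity_iff] using FiniteMultiplicity.not_iff_forall.mpr hdvd

variable {ι : Type*} [Fintype ι] [DecidableEq ι]

theorem eq_zero_of_one_add_four_nsmul_pow_prime_eq_one {p : ℕ} (hp : p.Prime) {b : Matrix ι ι ℤ}
    (h : (1 + 4 • b) ^ p = 1) : b = 0 := by
  refine eq_zero_of_forall_exists_eq_two_pow_nsmul fun j => ?_
  induction j with
  | zero => exact ⟨b, by simp⟩
  | succ j ih =>
    obtain ⟨c, rfl⟩ := ih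
    rw [smul_smul, show 4 * 2 ^ j = 2 ^ (j + 2) by ring] at h
    obtain ⟨c', rfl⟩ := exists_eq_two_nsmul_of_one_add_pow_prime_eq_one hp h
    exact ⟨c', by rw [smul_smul, pow_succ]⟩

theorem eq_zero_of_isOfFinOrder_one_add_four_nsmul {b : Matrix ι ι ℤ}
    (h : IsOfFinOrder (1 + 4 • b)) : b = 0 := by
  set M := 1 + 4 • b
  suffices hM : orderOf M = 1 by
    refine nsmul_right_injective (by norm_num : 4 ≠ 0) ?_
    simpa [M] using orderOf_eq_one_iff.mp hM
  by_contra hM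
  set p := (orderOf M).minFac
  have hp : p.Prime := Nat.minFac_prime hM
  have hord : orderOf (M ^ (orderOf M / p)) = p :=
    orderOf_pow_orderOf_div h.orderOf_pos.ne' (Nat.minFac_dvd _)
  obtain ⟨b', hb'⟩ : ∃ b', M ^ (orderOf M / p) = 1 + 4 • b' :=
    exists_one_add_four_nsmul_pow_eq b _
  have hb'p : (1 + 4 • b') ^ p = 1 := by
    rw [← hord, ← hb', pow_orderOf_eq_one]
  rw [hb', eq_zero_of_one_add_four_nsmul_pow_prime_eq_one hp hb'p, smul_zero, add_zero,
    orderOf_one] at hord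
  exact hp.one_lt.ne hord

theorem sq_eq_one_of_isOfFinOrder_one_add_two_nsmul {a : Matrix ι ι ℤ}
    (h : IsOfFinOrder (1 + 2 • a)) : (1 + 2 • a) ^ 2 = 1 := by
  have hsq : (1 + 2 • a) ^ 2 = 1 + 4 • (a + a ^ 2) := by
    simp only [sq, add_mul, mul_add, smul_mul_assoc, mul_smul_comm, one_mul, mul_one]
    module
  rw [hsq, eq_zero_of_isOfFinOrder_one_add_four_nsmul (b := a + a ^ 2) (by rw [← hsq]; exact h.pow),
    smul_zero, add_zero]

variable {R : Type*} [CommRing R]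

/-- Satisfied by `v wᵀ` with `wᵀ v = 1`, the projection onto `R v` along `ker wᵀ`. -/
def IsRankOneIdempotent (Q : Matrix ι ι R) : Prop :=
  Q.trace = 1 ∧ ∀ X : Matrix ι ι R, Q * X * Q = (Q * X).trace • Q

theorem isRankOneIdempotent_single (i : ι) : IsRankOneIdempotent (single i i (1 : R)) :=
  ⟨trace_single_eq_same i 1, fun X => by simp [trace_single_mul]⟩

namespace IsRankOneIdempotent

variable {P Q : Matrix ι ι R}

omit [DecidableEq ι] in
theorem ne_zero [Nontrivial R] (hQ : IsRankOneIdempotent Q) : Q ≠ 0 := by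
  rintro rfl
  simpa using hQ.1

theorem mul_self (hQ : IsRankOneIdempotent Q) : Q * Q = Q := by
  simpa [hQ.1] using hQ.2 1

theorem conj (hQ : IsRankOneIdempotent Q) {T T' : Matrix ι ι R} (hT : T * T' = 1) :
    IsRankOneIdempotent (T' * Q * T) := by
  refine ⟨by rw [trace_mul_cycle, hT, one_mul, hQ.1], fun X => ?_⟩
  calc T' * Q * T * X * (T' * Q * T) = T' * (Q * (T * X * T') * Q) * T := by
        simp only [Matrix.mul_assoc]
    _ = (T' * Q * T * X).trace • (T' * Q * T) := by
        rw [hQ.2, mul_smul_comm, smul_mul_assoc,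
          show T' * Q * T * X = T' * (Q * T * X) by simp only [Matrix.mul_assoc], trace_mul_comm T']
        simp only [Matrix.mul_assoc]

theorem mul_eq_zero_of_commute [IsDomain R] (hP : IsRankOneIdempotent P)
    (hQ : IsRankOneIdempotent Q) (hPQ : Commute P Q) (hne : P ≠ Q) : P * Q = 0 := by
  set c := (P * Q).trace
  have hcP : P * Q = c • P := by
    have h := hP.2 Q
    rwa [Matrix.mul_assoc, ← hPQ.eq, ← Matrix.mul_assoc, hP.mul_self] at h
  have hcQ : P * Q = c • Q := by
    have h := hQ.2 P
    rwa [← hPQ.eq, Matrix.mul_assoc, hQ.mul_self] at h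
  by_contra hc
  have hc0 : c ≠ 0 := fun h0 => hc (by rw [hcP, h0, zero_smul])
  exact hne (smul_right_injective _ hc0 (hcP.symm.trans hcQ))

end IsRankOneIdempotent

end Matrix

theorem AddSubgroup.toZModSubmodule_closure {n : ℕ} {M : Type*} [AddCommGroup M]
    [Module (ZMod n) M] (s : Set M) :
    AddSubgroup.toZModSubmodule n (AddSubgroup.closure s) = Submodule.span (ZMod n) s :=
  le_antisymm
    ((AddSubgroup.toZModSubmodule n).le_symm_apply.mp
      ((AddSubgroup.closure_le _).mpr Submodule.subset_span))
    (Submodule.span_le.mpr AddSubgroup.subset_closure)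

theorem CommGroup.nonempty_mulEquiv_pi_zmod_two {H : Type*} [CommGroup H] {S : Set H} [Finite S]
    (hsq : ∀ s ∈ S, s ^ 2 = 1) (hgen : Subgroup.closure S = ⊤)
    (hind : ∀ s ∈ S, s ∉ Subgroup.closure (S \ {s})) :
    Nonempty (H ≃* Multiplicative (Fin (Nat.card S) → ZMod 2)) := by
  have hsq' : ∀ h : H, h ^ 2 = 1 := fun h =>
    (Subgroup.closure_le (powMonoidHom 2 : H →* H).ker).mpr hsq (hgen ▸ Subgroup.mem_top h)
  let _ : Module (ZMod 2) (Additive H) := AddCommGroup.zmodModule fun x => hsq' x.toMul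
  have hspan : ∀ T : Set H, Submodule.span (ZMod 2) (Additive.toMul ⁻¹' T) =
      AddSubgroup.toZModSubmodule 2 (Subgroup.closure T).toAddSubgroup := fun T => by
    rw [Subgroup.toAddSubgroup_closure, AddSubgroup.toZModSubmodule_closure]
  have hli : LinearIndepOn (ZMod 2) id (Additive.toMul ⁻¹' S) := by
    rw [linearIndepOn_iff_notMem_span]
    intro x hx
    rw [Set.image_id, show Additive.toMul ⁻¹' S \ {x} = Additive.toMul ⁻¹' (S \ {x.toMul}) from rfl,
      hspan]
    exact hind _ hx
  have hsp : ⊤ ≤ Submodule.span (ZMod 2) (Set.range ((↑) : Additive.toMul ⁻¹' S → Additive H)) := by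
    rw [Subtype.range_coe, hspan, hgen]
    exact le_rfl
  let b := (Module.Basis.mk hli hsp).reindex (Finite.equivFin S)
  exact ⟨AddEquiv.toMultiplicativeRight b.equivFun.toAddEquiv⟩

namespace Subgroup

variable {G : Type*} [Group G] {S : Set G}

theorem closure_normal_of_conj_mem (h : ∀ g : G, ∀ s ∈ S, g * s * g⁻¹ ∈ S) :
    (closure S).Normal :=
  ⟨fun _ hx g => (closure_le ((closure S).comap (MulAut.conj g).toMonoidHom)).mpr
    (fun s hs => subset_closure (h g s hs)) hx⟩

open scoped IsMulCommutative in
theorem nonempty_closure_mulEquiv_pi_zmod_two [Finite S]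
    (hcomm : ∀ a ∈ S, ∀ b ∈ S, a * b = b * a) (hsq : ∀ s ∈ S, s ^ 2 = 1)
    (hind : ∀ s ∈ S, s ∉ closure (S \ {s})) :
    Nonempty (closure S ≃* Multiplicative (Fin (Nat.card S) → ZMod 2)) := by
  have := isMulCommutative_closure hcomm
  let S' : Set (closure S) := (↑) ⁻¹' S
  have hcard : Nat.card S' = Nat.card S :=
    Nat.card_preimage_of_injective Subtype.val_injective (by simp [subset_closure])
  have : Finite S' := ((Set.toFinite S).preimage Subtype.val_injective.injOn).to_subtype
  rw [← hcard]
  refine CommGroup.nonempty_mulEquiv_pi_zmod_two (S := S')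
    (fun s hs => Subtype.ext (by simpa using hsq _ hs)) closure_closure_coe_preimage
    (fun s hs hmem => hind _ hs ?_)
  exact (closure_le ((closure (S \ {s.1})).comap (closure S).subtype)).mpr
    (fun t ht => subset_closure ⟨ht.1, fun h => ht.2 (Subtype.ext h)⟩) hmem

end Subgroup

theorem diagReflMat_eq {n : ℕ} (hn : 0 < n) :
    diagReflMat n = 1 - 2 • single ⟨0, hn⟩ ⟨0, hn⟩ 1 := by
  ext i j
  simp only [diagReflMat, diagonal_apply, Matrix.sub_apply, one_apply, Matrix.smul_apply,
    single_apply, Fin.ext_iff]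
  split_ifs <;> simp <;> omega

namespace IsDiagRefl

variable {n : ℕ} {x y : GL (Fin n) ℤ}

theorem pos (h : IsDiagRefl n x) : 0 < n := by
  rcases Nat.eq_zero_or_pos n with rfl | hn
  · simpa [Subsingleton.elim (1 - (x : Matrix (Fin 0) (Fin 0) ℤ)) 0] using h.1
  · exact hn

theorem exists_eq_one_sub_two_nsmul (h : IsDiagRefl n x) :
    ∃ Q : Matrix (Fin n) (Fin n) ℤ, Q.IsRankOneIdempotent ∧ (x : Matrix _ _ ℤ) = 1 - 2 • Q := by
  obtain ⟨t, ht⟩ := h.2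
  set E : Matrix (Fin n) (Fin n) ℤ := single ⟨0, h.pos⟩ ⟨0, h.pos⟩ 1
  refine ⟨↑t⁻¹ * E * ↑t, (isRankOneIdempotent_single _).conj t.mul_inv, ?_⟩
  calc (x : Matrix (Fin n) (Fin n) ℤ) = ↑(t⁻¹ * (t * x * t⁻¹) * t) := by group
    _ = ↑t⁻¹ * (1 - 2 • E) * ↑t := by rw [Units.val_mul, Units.val_mul, ht, diagReflMat_eq]
    _ = 1 - 2 • (↑t⁻¹ * E * ↑t) := by
      rw [mul_sub, sub_mul, mul_one, t.inv_mul, mul_smul_comm, smul_mul_assoc]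

theorem mul_self (h : IsDiagRefl n x) : x * x = 1 := by
  obtain ⟨Q, hQ, hx⟩ := h.exists_eq_one_sub_two_nsmul
  ext1
  rw [Units.val_mul, hx, Units.val_one]
  simp only [mul_sub, sub_mul, one_mul, mul_one, smul_mul_assoc, mul_smul_comm, hQ.mul_self]
  module

theorem conj (h : IsDiagRefl n x) (g : GL (Fin n) ℤ) : IsDiagRefl n (g * x * g⁻¹) := by
  refine ⟨?_, ?_⟩
  · have hconj : 1 - ((g * x * g⁻¹ : GL (Fin n) ℤ) : Matrix (Fin n) (Fin n) ℤ) =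
        (g : Matrix (Fin n) (Fin n) ℤ) * (1 - x) * (g⁻¹ : GL (Fin n) ℤ) := by
      rw [Units.val_mul, Units.val_mul, mul_sub, sub_mul, mul_one, g.mul_inv]
    rw [hconj, rank_mul_eq_left_of_isUnit_det _ _ (isUnits_det_units g⁻¹),
      rank_mul_eq_right_of_isUnit_det _ _ (isUnits_det_units g), h.1]
  · obtain ⟨t, ht⟩ := h.2
    exact ⟨t * g⁻¹, by rw [← ht]; group⟩

theorem commute_of_isOfFinOrder_mul (hx : IsDiagRefl n x) (hy : IsDiagRefl n y)
    (hxy : IsOfFinOrder (x * y)) : Commute x y := by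
  obtain ⟨Q, -, hxQ⟩ := hx.exists_eq_one_sub_two_nsmul
  obtain ⟨P, -, hyP⟩ := hy.exists_eq_one_sub_two_nsmul
  have hmat : ((x * y : GL (Fin n) ℤ) : Matrix (Fin n) (Fin n) ℤ) =
      1 + 2 • (2 • (Q * P) - Q - P) := by
    rw [Units.val_mul, hxQ, hyP]
    simp only [mul_sub, sub_mul, one_mul, mul_one, smul_mul_assoc, mul_smul_comm]
    module
  have hsq : (x * y) ^ 2 = 1 := by
    ext1
    rw [Units.val_pow_eq_pow_val, hmat, Units.val_one]
    exact sq_eq_one_of_isOfFinOrder_one_add_two_nsmul (hmat ▸ Units.isOfFinOrder_val.mpr hxy)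
  calc x * y = (x * y)⁻¹ := (inv_eq_of_mul_eq_one_right (by rwa [sq] at hsq)).symm
    _ = y * x := by
      rw [_root_.mul_inv_rev, inv_eq_of_mul_eq_one_right hx.mul_self,
        inv_eq_of_mul_eq_one_right hy.mul_self]

theorem notMem_closure_diff {G : Subgroup (GL (Fin n) ℤ)} {S : Set G}
    (hS : ∀ s ∈ S, IsDiagRefl n s) (hcomm : ∀ a ∈ S, ∀ b ∈ S, a * b = b * a) {s : G}
    (hs : s ∈ S) : s ∉ Subgroup.closure (S \ {s}) := by
  obtain ⟨Q, hQ, hsQ⟩ := (hS s hs).exists_eq_one_sub_two_nsmul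
  have hfix : ∀ t ∈ S \ {s}, ((t : GL (Fin n) ℤ) : Matrix (Fin n) (Fin n) ℤ) * Q = Q := by
    rintro t ⟨ht, hts⟩
    obtain ⟨P, hP, htP⟩ := (hS t ht).exists_eq_one_sub_two_nsmul
    have hPQ : Commute P Q := commute_of_commute_one_sub_two_nsmul <| by
      rw [← htP, ← hsQ, Commute, SemiconjBy, ← Units.val_mul, ← Units.val_mul, ← Subgroup.coe_mul,
        ← Subgroup.coe_mul, hcomm t ht s hs]
    have hne : P ≠ Q := fun h => hts (Subtype.ext (Units.ext (by rw [htP, hsQ, h])))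
    rw [htP, sub_mul, one_mul, smul_mul_assoc, hP.mul_eq_zero_of_commute hQ hPQ hne, smul_zero,
      sub_zero]
  have hle : Subgroup.closure (S \ {s}) ≤
      (MulAction.stabilizer (GL (Fin n) ℤ) Q).comap G.subtype :=
    (Subgroup.closure_le _).mpr hfix
  intro hmem
  have hsfix : ((s : GL (Fin n) ℤ) : Matrix (Fin n) (Fin n) ℤ) * Q = Q := hle hmem
  rw [hsQ, sub_mul, one_mul, smul_mul_assoc, hQ.mul_self, sub_eq_self] at hsfix
  exact hQ.ne_zero (nsmul_right_injective two_ne_zero (by simpa using hsfix))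

end IsDiagRefl

/-- Let `G` be a finite subgroup of `GL(L) = GLₙ(ℤ)` and let `D` be the subgroup of `G`
generated by the diagonalizable reflections in `G`. Then `D` is normal in `G` and is an
elementary abelian `2`-group of rank `r`, the number of diagonalizable reflections in `G`. -/
theorem diagonalizable_reflections_subgroup (n : ℕ) (G : Subgroup (GL (Fin n) ℤ))
    (hG : Finite G) :
    (Subgroup.closure {s : G | IsDiagRefl n (s : GL (Fin n) ℤ)}).Normal ∧
    Nonempty ((Subgroup.closure {s : G | IsDiagRefl n (s : GL (Fin n) ℤ)}) ≃*
      Multiplicative (Fin (Nat.card {s : G | IsDiagRefl n (s : GL (Fin n) ℤ)}) → ZMod 2)) := by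
  set S : Set G := {s : G | IsDiagRefl n (s : GL (Fin n) ℤ)}
  have hcomm : ∀ a ∈ S, ∀ b ∈ S, a * b = b * a := fun a ha b hb =>
    Subtype.ext (IsDiagRefl.commute_of_isOfFinOrder_mul ha hb
      (G.subtype.isOfFinOrder (isOfFinOrder_of_finite (a * b)))).eq
  refine ⟨Subgroup.closure_normal_of_conj_mem fun g s hs => ?_,
    Subgroup.nonempty_closure_mulEquiv_pi_zmod_two hcomm
      (fun s hs => Subtype.ext (by simpa [sq] using hs.mul_self))
      (fun s hs => IsDiagRefl.notMem_closure_diff (fun _ h => h) hcomm hs)⟩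
  simpa [S] using hs.conj g
end

section
/- Let $R$ be a commutative graded Krull domain over a commutative ring $k$ and let $c$ be a positive integer. Then the Veronese subalgebra $R^{(c)} = \bigoplus_{i \ge 0} R^{ci}$ is also a Krull domain; in fact $R^{(c)} = R \cap F$, where $F$ is the field of fractions of $R^{(c)}$ inside the field of fractions of $R$. -/
/-- A `Krull domain` (Bourbaki): an integral domain `R` admitting a family of discrete
(ℤ-valued additive) valuations on its fraction field such that `R` is exactly the set of
elements that are nonnegative under every valuation, and every nonzero element is nonzero
under only finitely many of the valuations. -/
def IsKrullDomain (R : Type) [CommRing R] [IsDomain R] : Prop :=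
  ∃ (ι : Type) (v : ι → AddValuation (FractionRing R) (WithTop ℤ)),
    (∀ x : FractionRing R,
      (∀ i : ι, 0 ≤ v i x) ↔ ∃ r : R, algebraMap R (FractionRing R) r = x) ∧
    (∀ x : FractionRing R, x ≠ 0 → {i : ι | v i x ≠ 0}.Finite)

theorem veronese_closed (k A : Type) [CommRing k] [CommRing A] [IsDomain A] [Algebra k A]
    (𝒜 : ℕ → Submodule k A) [GradedAlgebra 𝒜] (c : ℕ)
    (S : Subalgebra k A)
    (hS : ∀ a : A, a ∈ S ↔ ∀ i : ℕ, ¬ c ∣ i → (DirectSum.decompose 𝒜 a i : A) = 0)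
    {x q : A} (hq : q ∈ S) (hq0 : q ≠ 0) (hxq : x * q ∈ S) : x ∈ S := by
  classical
  rw [hS]
  by_contra h
  push_neg at h
  obtain ⟨i, hi, hxi⟩ := h
  set dx := DirectSum.decompose 𝒜 x with hdx
  set dq := DirectSum.decompose 𝒜 q with hdq
  have hBne : (dx.support.filter (fun i => ¬ c ∣ i)).Nonempty :=
    ⟨i, Finset.mem_filter.2 ⟨DFinsupp.mem_support_iff.2 (fun h0 => hxi (by rw [h0]; rfl)), hi⟩⟩
  set B := dx.support.filter (fun i => ¬ c ∣ i) with hB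
  set i₀ := B.max' hBne with hi₀
  have hi₀B : i₀ ∈ B := B.max'_mem hBne
  have hqne : dq.support.Nonempty := by
    rw [Finset.nonempty_iff_ne_empty, Ne, DFinsupp.support_eq_empty]
    intro h0
    exact hq0 ((DirectSum.decompose 𝒜).injective
      ((hdq ▸ h0 : DirectSum.decompose 𝒜 q = 0).trans (DirectSum.decompose_zero 𝒜).symm))
  set j₀ := dq.support.max' hqne with hj₀
  have hj₀mem : j₀ ∈ dq.support := dq.support.max'_mem hqne
  have hcj : ∀ j ∈ dq.support, c ∣ j := by
    intro j hj
    by_contra hcj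
    exact DFinsupp.mem_support_iff.1 hj (Subtype.ext ((hS q).1 hq j hcj))
  have hci₀ : ¬ c ∣ i₀ := (Finset.mem_filter.1 hi₀B).2
  have hcn : ¬ c ∣ (i₀ + j₀) := by
    intro hd
    exact hci₀ ((Nat.dvd_add_right (hcj j₀ hj₀mem)).mp (by rwa [Nat.add_comm] at hd))
  -- compute the (i₀+j₀) component of x*q
  have key : (DirectSum.decompose 𝒜 (x * q) (i₀ + j₀) : A)
      = (dx i₀ : A) * (dq j₀ : A) := by
    rw [DirectSum.decompose_mul, ← hdx, ← hdq, DirectSum.coe_mul_apply]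
    rw [Finset.sum_eq_single (i₀, j₀)]
    · intro ij hij hne
      exfalso
      obtain ⟨hmem, hsum⟩ := Finset.mem_filter.1 hij
      obtain ⟨hij1, hij2⟩ := Finset.mem_product.1 hmem
      have hj_le : ij.2 ≤ j₀ := dq.support.le_max' _ hij2
      have hi_not : ¬ c ∣ ij.1 := by
        intro hd
        have : ¬ c ∣ ij.2 := by
          intro hd2
          exact hcn (hsum ▸ Dvd.dvd.add hd hd2)
        exact this (hcj _ hij2)
      have hi_le : ij.1 ≤ i₀ := B.le_max' _ (Finset.mem_filter.2 ⟨hij1, hi_not⟩)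
      have : ij.1 = i₀ ∧ ij.2 = j₀ := by omega
      exact hne (Prod.ext this.1 this.2)
    · intro hnot
      exfalso
      apply hnot
      refine Finset.mem_filter.2 ⟨Finset.mem_product.2 ⟨?_, hj₀mem⟩, rfl⟩
      exact (Finset.mem_filter.1 hi₀B).1
  have hzero : (DirectSum.decompose 𝒜 (x * q) (i₀ + j₀) : A) = 0 := (hS _).1 hxq _ hcn
  rw [key] at hzero
  rcases mul_eq_zero.1 hzero with h1 | h1
  · exact DFinsupp.mem_support_iff.1 (Finset.mem_filter.1 hi₀B).1 (Subtype.ext h1)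
  · exact DFinsupp.mem_support_iff.1 hj₀mem (Subtype.ext h1)

/-- Let `R` be a commutative graded Krull domain (graded over a commutative ring `k`) and `c`
a positive integer. Then the Veronese subalgebra `R⁽ᶜ⁾ = ⊕ᵢ R^{ci}` (the subalgebra `S` of
elements whose homogeneous components vanish in all degrees not divisible by `c`) is a Krull
domain; in fact `S = R ∩ F`, where `F` is the field of fractions of `S` inside that of `R`:
an element `x` of `R` lies in `S` iff it is a quotient of two elements of `S`, i.e.
`x * q = p` with `p, q ∈ S`, `q ≠ 0`. -/
theorem veronese_krull (k A : Type) [CommRing k] [CommRing A] [IsDomain A] [Algebra k A]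
    (𝒜 : ℕ → Submodule k A) [GradedAlgebra 𝒜]
    (hA : IsKrullDomain A) (c : ℕ) (hc : 0 < c)
    (S : Subalgebra k A)
    (hS : ∀ a : A, a ∈ S ↔ ∀ i : ℕ, ¬ c ∣ i → (DirectSum.decompose 𝒜 a i : A) = 0) :
    IsKrullDomain S ∧
    (∀ x : A, x ∈ S ↔ ∃ p q : A, p ∈ S ∧ q ∈ S ∧ q ≠ 0 ∧ x * q = p) := by
  have part2 : ∀ x : A, x ∈ S ↔ ∃ p q : A, p ∈ S ∧ q ∈ S ∧ q ≠ 0 ∧ x * q = p := by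
    intro x
    constructor
    · intro hx
      exact ⟨x, 1, hx, S.one_mem, one_ne_zero, mul_one x⟩
    · rintro ⟨p, q, hp, hq, hq0, hpq⟩
      exact veronese_closed k A 𝒜 c S hS hq hq0 (hpq ▸ hp)
  refine ⟨?_, part2⟩
  obtain ⟨ι, v, hv1, hv2⟩ := hA
  -- the inclusion S → FractionRing A
  set g : S →+* FractionRing A :=
    (algebraMap A (FractionRing A)).comp (Subalgebra.val S).toRingHom with hg
  have hginj : Function.Injective g :=
    (IsFractionRing.injective A (FractionRing A)).comp Subtype.val_injective
  set φ : FractionRing S →+* FractionRing A := IsFractionRing.lift hginj with hφ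
  have hφinj : Function.Injective φ := φ.injective
  have hφa : ∀ r : S, φ (algebraMap S (FractionRing S) r) = g r := fun r =>
    IsFractionRing.lift_algebraMap hginj r
  refine ⟨ι, fun i => (v i).comap φ, ?_, ?_⟩
  · intro x
    constructor
    · intro hx
      obtain ⟨a, ha⟩ := (hv1 (φ x)).1 (fun i => hx i)
      obtain ⟨s, t, ht, hst⟩ := IsFractionRing.div_surjective (A := S) x
      have ht0 : (t : S) ≠ 0 := nonZeroDivisors.ne_zero ht
      have htA : (t : A) ≠ 0 := fun h => ht0 (Subtype.ext h)
      have hgt : g t ≠ 0 := fun h => htA ((IsFractionRing.injective A (FractionRing A)) (by simpa [hg] using h))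
      have hmul : a * (t : A) = (s : A) := by
        apply IsFractionRing.injective A (FractionRing A)
        have : φ x * g t = g s := by
          rw [← hst, map_div₀, hφa, hφa, div_mul_cancel₀ _ hgt]
        rw [← ha] at this
        simpa [hg] using this
      have haS : a ∈ S :=
        veronese_closed k A 𝒜 c S hS t.2 htA (hmul ▸ s.2)
      refine ⟨⟨a, haS⟩, hφinj ?_⟩
      rw [hφa]
      simpa [hg] using ha
    · rintro ⟨r, rfl⟩ i
      have : φ (algebraMap S (FractionRing S) r) = algebraMap A (FractionRing A) (r : A) := hφa r
      have := (hv1 (algebraMap A (FractionRing A) (r : A))).2 ⟨(r : A), rfl⟩ i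
      show (0 : WithTop ℤ) ≤ v i (φ (algebraMap S (FractionRing S) r))
      rw [hφa]
      exact this
  · intro x hx
    have : φ x ≠ 0 := fun h => hx (hφinj (by simpa using h))
    exact hv2 (φ x) this
end

section
/- Let $k$ be a commutative ring, $d \ge 2$, and $S = k[t_1,\dots,t_d]^{(2)}$ the second Veronese subring of the polynomial ring. Then $S$ decomposes as a direct sum of free modules over the polynomial subring $k[x_1,\dots,x_d]$ (where $x_i = t_i^2$): namely, $S = \bigoplus x_{i_1,j_1} x_{i_2,j_2} \cdots x_{i_r,j_r}\, k[x_1,\dots,x_d]$, where the sum ranges over all sequences $1 \le i_1 < j_1 < i_2 < j_2 < \dots < i_r < j_r \le d$ with $r \ge 0$ (the $r=0$ summand being $k[x_1,\dots,x_d]$), and $x_{i,j} = t_i t_j$. -/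
/-!
A monomial `t^m` lies in the summand indexed by `T` exactly when `T` is the set of indices at
which `m` is odd: indeed `m = ∑_{i ∈ T} eᵢ + 2n` for some `n` precisely in that case. So each
summand is spanned by the monomials of one fibre of `m ↦ {i | m i odd}`, and distinct summands
are independent. Since `deg m ≡ #{i | m i odd} (mod 2)`, the even-cardinality fibres together
make up the monomials of even degree, which span the even part `S`.
-/

open MvPolynomial

/-- The `k`-submodule `(∏_{i ∈ T} tᵢ) · k[t₁²,…,t_d²]` of `k[t₁,…,t_d]`.
For a set `T = {i₁ < j₁ < i₂ < j₂ < … < i_r < j_r}` of even cardinality this is the summand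
`x_{i₁,j₁} x_{i₂,j₂} ⋯ x_{i_r,j_r} · k[x₁,…,x_d]` (where `xᵢ = tᵢ²`, `x_{i,j} = tᵢtⱼ`). -/
noncomputable def veroneseSummand (k : Type) [CommRing k] (d : ℕ) (T : Finset (Fin d)) :
    Submodule k (MvPolynomial (Fin d) k) :=
  Submodule.map (LinearMap.mulLeft k (∏ i ∈ T, X i))
    (Subalgebra.toSubmodule
      (Algebra.adjoin k (Set.range fun i : Fin d => (X i : MvPolynomial (Fin d) k) ^ 2)))

open Function Finsupp

namespace Finsupp
variable {σ : Type*}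

def oddSupport (m : σ →₀ ℕ) : Finset σ := {i ∈ m.support | Odd (m i)}

@[simp]
lemma mem_oddSupport {m : σ →₀ ℕ} {i : σ} : i ∈ m.oddSupport ↔ Odd (m i) := by
  simp only [oddSupport, Finset.mem_filter, mem_support_iff, and_iff_right_iff_imp]
  exact fun h => h.pos.ne'

lemma even_degree_iff_even_card_oddSupport (m : σ →₀ ℕ) :
    Even m.degree ↔ Even m.oddSupport.card := by
  rw [degree_apply, Finset.even_sum_iff_even_card_odd, oddSupport]

lemma sum_single_one_apply [DecidableEq σ] (T : Finset σ) (i : σ) :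
    (∑ j ∈ T, single j 1 : σ →₀ ℕ) i = if i ∈ T then 1 else 0 := by
  simp [finsetSum_apply, single_apply]

lemma oddSupport_eq_iff_mem_image {m : σ →₀ ℕ} {T : Finset σ} :
    m.oddSupport = T ↔ m ∈ (∑ j ∈ T, single j 1 + ·) '' Set.range (2 • ·) := by
  classical
  constructor
  · rintro rfl
    refine ⟨_, ⟨m.mapRange (· / 2) (Nat.zero_div 2), rfl⟩, ext fun i => ?_⟩
    rw [add_apply, sum_single_one_apply]
    by_cases hi : Odd (m i) <;> simp [hi] <;> grind
  · rintro ⟨_, ⟨n, rfl⟩, rfl⟩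
    ext i
    rw [mem_oddSupport, add_apply, sum_single_one_apply]
    by_cases hi : i ∈ T <;> simp [hi]

end Finsupp

namespace MvPolynomial
variable {σ R : Type*} [CommSemiring R]

lemma toSubmodule_adjoin_range_X_pow (n : ℕ) :
    Subalgebra.toSubmodule (Algebra.adjoin R (Set.range fun i => (X i : MvPolynomial σ R) ^ n)) =
      restrictSupport R (Set.range (n • ·)) := by
  have hgen : Set.range (fun i => (X i : MvPolynomial σ R) ^ n) = expand n '' Set.range X := by
    rw [← Set.range_comp]; simp [Function.comp_def]
  rw [hgen, Algebra.adjoin_image, adjoin_range_X, Algebra.map_top]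
  change LinearMap.range (expand n : MvPolynomial σ R →ₐ[R] _).toLinearMap = _
  rw [LinearMap.range_eq_map, ← restrictSupport_univ, restrictSupport_eq_span,
    restrictSupport_eq_span, Submodule.map_span, ← Set.image_comp, Set.image_univ,
    ← Set.range_comp]
  simp [Function.comp_def]

lemma map_mulLeft_monomial_restrictSupport (e : σ →₀ ℕ) (s : Set (σ →₀ ℕ)) :
    (restrictSupport R s).map (LinearMap.mulLeft R (monomial e 1)) =
      restrictSupport R ((e + ·) '' s) := by
  rw [restrictSupport_eq_span, restrictSupport_eq_span, Submodule.map_span, ← Set.image_comp,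
    Set.image_image]
  simp [Function.comp_def, monomial_mul]

lemma restrictSupport_iUnion {ι : Type*} (s : ι → Set (σ →₀ ℕ)) :
    restrictSupport R (⋃ i, s i) = ⨆ i, restrictSupport R (s i) := by
  refine le_antisymm (fun p hp => ?_)
    (iSup_le fun i => restrictSupport_mono R (Set.subset_iUnion s i))
  rw [p.as_sum]
  refine Submodule.sum_mem _ fun m hm => ?_
  obtain ⟨i, hi⟩ := Set.mem_iUnion.1 ((mem_restrictSupport_iff R).1 hp hm)
  exact Submodule.mem_iSup_of_mem i ((monomial_mem_restrictSupport R).2 (Or.inl hi))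

lemma disjoint_restrictSupport {s t : Set (σ →₀ ℕ)} (h : Disjoint s t) :
    Disjoint (restrictSupport R s) (restrictSupport R t) := by
  rw [Submodule.disjoint_def]
  intro p hs ht
  rw [← support_eq_empty, ← Finset.coe_eq_empty, ← Set.subset_empty_iff]
  exact h ((mem_restrictSupport_iff R).1 hs) ((mem_restrictSupport_iff R).1 ht)

lemma iSupIndep_restrictSupport {ι : Type*} {s : ι → Set (σ →₀ ℕ)}
    (hs : Pairwise (Disjoint on s)) : iSupIndep fun i => restrictSupport R (s i) := fun _ =>
  (disjoint_restrictSupport disjoint_compl_right).mono_right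
    (iSup₂_le fun _ hj => restrictSupport_mono R (hs hj).subset_compl_right)

lemma prod_X_eq_monomial (T : Finset σ) :
    ∏ i ∈ T, (X i : MvPolynomial σ R) = monomial (∑ i ∈ T, single i 1) 1 :=
  (monomial_sum_one T _).symm

lemma forall_odd_homogeneousComponent_eq_zero_iff {p : MvPolynomial σ R} :
    (∀ n, Odd n → homogeneousComponent n p = 0) ↔
      p ∈ restrictSupport R {m | Even m.degree} := by
  rw [mem_restrictSupport_iff]
  constructor
  · intro h m hm
    by_contra hodd
    have hcoeff := coeff_homogeneousComponent m.degree p m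
    rw [h _ (Nat.not_even_iff_odd.1 hodd), if_pos rfl, coeff_zero] at hcoeff
    exact mem_support_iff.1 hm hcoeff.symm
  · intro h n hn
    refine homogeneousComponent_eq_zero' n p fun m hm hdeg => ?_
    exact Nat.not_even_iff_odd.2 hn (hdeg ▸ h hm)

end MvPolynomial

lemma veroneseSummand_eq_restrictSupport (k : Type) [CommRing k] (d : ℕ) (T : Finset (Fin d)) :
    veroneseSummand k d T = restrictSupport k (oddSupport ⁻¹' {T}) := by
  rw [veroneseSummand, toSubmodule_adjoin_range_X_pow, prod_X_eq_monomial,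
    map_mulLeft_monomial_restrictSupport]
  congr 1
  ext m
  exact oddSupport_eq_iff_mem_image.symm

theorem veronese2_hironaka_general (k : Type) [CommRing k] (d : ℕ) :
    (iSupIndep fun T : {T : Finset (Fin d) // Even T.card} => veroneseSummand k d T.1) ∧
    ∀ p : MvPolynomial (Fin d) k,
      (∀ m : ℕ, Odd m → homogeneousComponent m p = 0) ↔
        p ∈ ⨆ T : {T : Finset (Fin d) // Even T.card}, veroneseSummand k d T.1 := by
  have hfibers : (⋃ T : {T : Finset (Fin d) // Even T.card}, oddSupport ⁻¹' {T.1}) =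
      {m | Even m.degree} := by
    ext m
    simp [even_degree_iff_even_card_oddSupport]
  simp only [veroneseSummand_eq_restrictSupport]
  refine ⟨(iSupIndep_restrictSupport (s := fun T => oddSupport ⁻¹' {T}) fun _ _ hne => ?_).comp
    Subtype.val_injective, fun p => ?_⟩
  · exact (Set.disjoint_singleton.2 hne).preimage _
  · rw [forall_odd_homogeneousComponent_eq_zero_iff, ← hfibers, restrictSupport_iUnion]

/-- Hironaka decomposition of the second Veronese subring `S` of `k[t₁,…,t_d]` (`d ≥ 2`):
the submodules `x_{i₁,j₁} ⋯ x_{i_r,j_r} · k[x₁,…,x_d]`, indexed by the subsets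
`T = {i₁ < j₁ < ⋯ < i_r < j_r}` of even cardinality (with `r = 0` giving `k[x₁,…,x_d]`),
are independent and their sum is exactly `S` (the polynomials all of whose odd-degree
homogeneous components vanish). -/
theorem veronese2_hironaka (k : Type) [CommRing k] (d : ℕ) (hd : 2 ≤ d) :
    (iSupIndep fun T : {T : Finset (Fin d) // Even T.card} => veroneseSummand k d T.1) ∧
    ∀ p : MvPolynomial (Fin d) k,
      (∀ m : ℕ, Odd m → homogeneousComponent m p = 0) ↔
        p ∈ ⨆ T : {T : Finset (Fin d) // Even T.card}, veroneseSummand k d T.1 :=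
  veronese2_hironaka_general k d
end

section
/- Let $\mathcal{W} = \{\pm 1\}^n \rtimes S_n$ act on the Laurent polynomial ring $\mathbb{Z}[x_1^{\pm 1},\dots,x_n^{\pm 1}]$, where $S_n$ permutes the variables and the $i$-th sign factor inverts $x_i$. Then the ring of invariants is the polynomial ring $\mathbb{Z}[\sigma_1,\dots,\sigma_n]$, where $\sigma_i$ is the $i$-th elementary symmetric polynomial in the elements $\varphi_j = x_j + x_j^{-1}$; in particular the $\sigma_i$ are algebraically independent over $\mathbb{Z}$. -/
open Finset

/-- The monomial `x^v` in the group algebra `ℤ[ℤⁿ] = ℤ[x₁^{±1},…,xₙ^{±1}]`. -/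
noncomputable def mono (n : ℕ) (v : Fin n → ℤ) : AddMonoidAlgebra ℤ (Fin n → ℤ) :=
  AddMonoidAlgebra.single v 1

/-- The element `φⱼ = xⱼ + xⱼ⁻¹`. -/
noncomputable def phiB (n : ℕ) (j : Fin n) : AddMonoidAlgebra ℤ (Fin n → ℤ) :=
  mono n (Pi.single j 1) + mono n (-Pi.single j 1)

/-- The `i`-th elementary symmetric function `σᵢ` in `φ₁,…,φₙ` (here `i : Fin n` corresponds
to the classical index `i+1 ∈ {1,…,n}`). -/
noncomputable def sigmaB (n : ℕ) (i : Fin n) : AddMonoidAlgebra ℤ (Fin n → ℤ) :=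
  ∑ A ∈ Finset.powersetCard (i.1 + 1) (Finset.univ : Finset (Fin n)), ∏ j ∈ A, phiB n j

/-!
Invariance under the sign changes makes the coefficient of `x^v` depend only on `(|v₁|,…,|vₙ|)`,
so an invariant is an integral combination of the orbit sums `∏ⱼ (xⱼ^{aⱼ} + xⱼ^{-aⱼ})` (a factor
being `1` when `aⱼ = 0`), and `xᵏ + x⁻ᵏ` is the Dickson polynomial `D_k(1, 1)` evaluated at
`x + x⁻¹`. Hence it is `P(φ₁,…,φₙ)` for an integral polynomial `P`, which is unique because the
`φⱼ` are algebraically independent: `z ↦ z + z⁻¹` maps `ℂˣ` onto `ℂ`, so `P` vanishes on `ℂⁿ`.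
By uniqueness, permutation invariance makes `P` symmetric, and the fundamental theorem of
symmetric polynomials writes `P` uniquely as a polynomial in the elementary symmetric ones.
-/

open Polynomial in
lemma IsAlgClosed.exists_add_inv_eq {K : Type*} [Field K] [IsAlgClosed K] (c : K) :
    ∃ z : Kˣ, (z : K) + (z : K)⁻¹ = c := by
  have hdeg : (X ^ 2 - C c * X + 1 : K[X]).degree = 2 := by compute_degree!
  obtain ⟨x, hx⟩ := IsAlgClosed.exists_root _ (hdeg ▸ two_ne_zero)
  have hx' : x ^ 2 - c * x + 1 = 0 := by simpa using hx
  have hx0 : x ≠ 0 := by rintro rfl; simp at hx'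
  refine ⟨Units.mk0 x hx0, ?_⟩
  simp only [Units.val_mk0]
  field_simp
  linear_combination hx'

open MvPolynomial

namespace BnWeyl

variable {n : ℕ}

lemma mono_zero : mono n 0 = 1 := rfl

lemma mono_add (v w : Fin n → ℤ) : mono n (v + w) = mono n v * mono n w := by
  simp [mono, AddMonoidAlgebra.single_mul_single]

lemma mono_nsmul (k : ℕ) (v : Fin n → ℤ) : mono n (k • v) = mono n v ^ k := by
  simp [mono, AddMonoidAlgebra.single_pow]

lemma mono_sum {ι : Type*} (s : Finset ι) (f : ι → Fin n → ℤ) :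
    mono n (∑ i ∈ s, f i) = ∏ i ∈ s, mono n (f i) := by
  classical
  induction s using Finset.induction_on with
  | empty => rfl
  | insert i s hi ih => rw [sum_insert hi, prod_insert hi, mono_add, ih]

lemma coeff_mono (v w : Fin n → ℤ) : (mono n v).coeff w = if v = w then 1 else 0 := by
  simp [mono, AddMonoidAlgebra.coeff_single, Finsupp.single_apply]

def signedPerm (ε : Fin n → ℤˣ) (π : Equiv.Perm (Fin n)) : (Fin n → ℤ) →+ (Fin n → ℤ) where
  toFun v i := ε i * v (π i)
  map_zero' := by ext; simp
  map_add' v w := by ext; simp [mul_add]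

lemma signedPerm_apply (ε : Fin n → ℤˣ) (π : Equiv.Perm (Fin n)) (v : Fin n → ℤ) (i : Fin n) :
    signedPerm ε π v i = ε i * v (π i) := rfl

lemma signedPerm_injective (ε : Fin n → ℤˣ) (π : Equiv.Perm (Fin n)) :
    Function.Injective (signedPerm ε π) := fun v w h => funext fun i => by
  simpa [signedPerm_apply] using congrFun h (π.symm i)

lemma signedPerm_single (ε : Fin n → ℤˣ) (π : Equiv.Perm (Fin n)) (j : Fin n) :
    signedPerm ε π (Pi.single j 1) = (ε (π.symm j) : ℤ) • Pi.single (π.symm j) 1 := by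
  ext i
  rcases eq_or_ne i (π.symm j) with rfl | hi
  · simp [signedPerm_apply]
  · simp [signedPerm_apply, hi, π.eq_symm_apply.not.mp hi]

noncomputable def signedPermAlgHom (ε : Fin n → ℤˣ) (π : Equiv.Perm (Fin n)) :
    AddMonoidAlgebra ℤ (Fin n → ℤ) →ₐ[ℤ] AddMonoidAlgebra ℤ (Fin n → ℤ) :=
  AddMonoidAlgebra.mapDomainAlgHom ℤ ℤ (signedPerm ε π)

lemma coeff_signedPermAlgHom (ε : Fin n → ℤˣ) (π : Equiv.Perm (Fin n))
    (p : AddMonoidAlgebra ℤ (Fin n → ℤ)) :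
    (signedPermAlgHom ε π p).coeff =
      Finsupp.mapDomain (fun v : Fin n → ℤ => fun i => (ε i : ℤ) * v (π i)) p.coeff := rfl

lemma signedPermAlgHom_mono (ε : Fin n → ℤˣ) (π : Equiv.Perm (Fin n)) (v : Fin n → ℤ) :
    signedPermAlgHom ε π (mono n v) = mono n (signedPerm ε π v) := by
  simp [signedPermAlgHom, mono, AddMonoidAlgebra.mapDomain_single]

lemma signedPermAlgHom_phiB (ε : Fin n → ℤˣ) (π : Equiv.Perm (Fin n)) (j : Fin n) :
    signedPermAlgHom ε π (phiB n j) = phiB n (π.symm j) := by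
  rw [phiB, map_add, signedPermAlgHom_mono, signedPermAlgHom_mono, map_neg, signedPerm_single]
  rcases Int.units_eq_one_or (ε (π.symm j)) with h | h <;> simp [h, phiB, add_comm]

noncomputable def phiHom : MvPolynomial (Fin n) ℤ →ₐ[ℤ] AddMonoidAlgebra ℤ (Fin n → ℤ) :=
  aeval (phiB n)

lemma signedPermAlgHom_comp_phiHom (ε : Fin n → ℤˣ) (π : Equiv.Perm (Fin n)) :
    (signedPermAlgHom ε π).comp phiHom = phiHom.comp (rename π.symm) := by
  ext j
  simp [phiHom, signedPermAlgHom_phiB]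

lemma phiHom_esymm (i : Fin n) : phiHom (esymm (Fin n) ℤ (i + 1)) = sigmaB n i := by
  simp [esymm, sigmaB, phiHom]

lemma signedPermAlgHom_sigmaB (ε : Fin n → ℤˣ) (π : Equiv.Perm (Fin n)) (i : Fin n) :
    signedPermAlgHom ε π (sigmaB n i) = sigmaB n i := by
  rw [← phiHom_esymm, ← AlgHom.comp_apply, signedPermAlgHom_comp_phiHom, AlgHom.comp_apply,
    rename_esymm]

noncomputable def evalAt (z : Fin n → ℂˣ) : AddMonoidAlgebra ℤ (Fin n → ℤ) →ₐ[ℤ] ℂ :=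
  AddMonoidAlgebra.lift ℤ ℂ (Fin n → ℤ)
    { toFun v := ((∏ j, z j ^ v.toAdd j : ℂˣ) : ℂ)
      map_one' := by simp
      map_mul' v w := by simp [zpow_add, prod_mul_distrib] }

lemma evalAt_phiB (z : Fin n → ℂˣ) (j : Fin n) :
    evalAt z (phiB n j) = z j + (z j : ℂ)⁻¹ := by
  simp [evalAt, phiB, mono, Pi.single_apply]

lemma phiHom_injective : Function.Injective (phiHom (n := n)) := by
  refine (injective_iff_map_eq_zero _).2 fun P hP => ?_
  apply map_injective (Int.castRingHom ℂ) Int.cast_injective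
  refine MvPolynomial.funext fun c => ?_
  choose z hz using fun j => IsAlgClosed.exists_add_inv_eq (c j)
  have hc : c = fun j => evalAt z (phiB n j) := funext fun j => by simp [evalAt_phiB, hz]
  rw [eval_map, map_zero, map_zero, ← algebraMap_int_eq, ← aeval_def, hc, ← comp_aeval_apply]
  change evalAt z (phiHom P) = 0
  rw [hP, map_zero]

lemma coeff_signedPerm_of_invariant {ε : Fin n → ℤˣ} {π : Equiv.Perm (Fin n)}
    {p : AddMonoidAlgebra ℤ (Fin n → ℤ)} (hp : signedPermAlgHom ε π p = p) (v : Fin n → ℤ) :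
    p.coeff (signedPerm ε π v) = p.coeff v := by
  conv_lhs => rw [← hp]
  exact Finsupp.mapDomain_apply (signedPerm_injective ε π) p.coeff v

lemma coeff_natAbs_of_signInvariant {p : AddMonoidAlgebra ℤ (Fin n → ℤ)}
    (hp : ∀ ε, signedPermAlgHom ε 1 p = p) (v : Fin n → ℤ) :
    p.coeff (fun j => ((v j).natAbs : ℤ)) = p.coeff v := by
  let ε : Fin n → ℤˣ := fun j => if v j < 0 then -1 else 1
  have hε : signedPerm ε 1 v = fun j => ((v j).natAbs : ℤ) := by
    ext j
    by_cases h : v j < 0 <;> simp [signedPerm_apply, ε, h, abs_of_neg, abs_of_nonneg, not_lt.mp]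
  rw [← hε, coeff_signedPerm_of_invariant (hp ε)]

noncomputable def orbitSum (a : Fin n → ℕ) : AddMonoidAlgebra ℤ (Fin n → ℤ) :=
  ∏ j, ∑ s ∈ {(a j : ℤ), -(a j : ℤ)}, mono n (Pi.single j s)

lemma coeff_orbitSum (a : Fin n → ℕ) (v : Fin n → ℤ) :
    (orbitSum a).coeff v = if ∀ j, (v j).natAbs = a j then 1 else 0 := by
  classical
  rw [orbitSum, prod_univ_sum]
  simp_rw [← mono_sum, univ_sum_single, AddMonoidAlgebra.coeff_sum, Finsupp.finsetSum_apply,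
    coeff_mono, sum_ite_eq', Fintype.mem_piFinset, mem_insert, mem_singleton, Int.natAbs_eq_iff]

lemma orbitSum_mem_range (a : Fin n → ℕ) : orbitSum a ∈ (phiHom (n := n)).range := by
  refine Subalgebra.prod_mem _ fun j _ => ?_
  rcases Nat.eq_zero_or_pos (a j) with h | h
  · simp [h, mono_zero]
  have hinv : mono n (Pi.single j 1) * mono n (-Pi.single j 1) = 1 := by
    rw [← mono_add, add_neg_cancel, mono_zero]
  have hpos : Pi.single j (a j : ℤ) = a j • (Pi.single j 1 : Fin n → ℤ) := by
    ext i; simp [Pi.single_apply]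
  have hneg : Pi.single j (-(a j : ℤ)) = a j • -(Pi.single j 1 : Fin n → ℤ) := by
    rw [Pi.single_neg, hpos, smul_neg]
  refine (AlgHom.mem_range _).2 ⟨Polynomial.aeval (X j) (Polynomial.dickson 1 (1 : ℤ) (a j)), ?_⟩
  rw [sum_pair (by omega), hpos, hneg, mono_nsmul, mono_nsmul,
    ← Polynomial.dickson_one_one_eval_add_inv _ _ hinv, ← Polynomial.aeval_algHom_apply]
  simp [phiHom, phiB, Polynomial.aeval_def, Polynomial.eval₂_eq_eval_map, Polynomial.map_dickson]

lemma eq_sum_orbitSum {p : AddMonoidAlgebra ℤ (Fin n → ℤ)}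
    (hp : ∀ ε, signedPermAlgHom ε 1 p = p) :
    p = ∑ a ∈ p.coeff.support.image (fun v j => (v j).natAbs),
      p.coeff (fun j => (a j : ℤ)) • orbitSum a := by
  classical
  rw [← AddMonoidAlgebra.coeff_inj]
  ext v
  simp only [AddMonoidAlgebra.coeff_sum, Finsupp.finsetSum_apply, AddMonoidAlgebra.coeff_smul,
    Finsupp.smul_apply, coeff_orbitSum, smul_eq_mul, mul_ite, mul_one, mul_zero, ← funext_iff,
    sum_ite_eq, coeff_natAbs_of_signInvariant hp]
  split_ifs with hv
  · rfl
  · exact Finsupp.notMem_support_iff.1 fun hmem => hv (mem_image_of_mem _ hmem)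

lemma mem_range_phiHom_of_signInvariant {p : AddMonoidAlgebra ℤ (Fin n → ℤ)}
    (hp : ∀ ε, signedPermAlgHom ε 1 p = p) : p ∈ (phiHom (n := n)).range := by
  rw [eq_sum_orbitSum hp]
  exact Subalgebra.sum_mem _ fun a _ => Subalgebra.smul_mem _ (orbitSum_mem_range a) _

lemma aeval_sigmaB_eq : aeval (sigmaB n) =
    phiHom.comp ((symmetricSubalgebra (Fin n) ℤ).val.comp (esymmAlgHom (Fin n) ℤ n)) := by
  ext i
  simp [esymmAlgHom, phiHom_esymm]

lemma isSymmetric_of_phiHom_invariant {P : MvPolynomial (Fin n) ℤ}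
    (hP : ∀ π, signedPermAlgHom 1 π (phiHom P) = phiHom P) : P.IsSymmetric := fun σ =>
  phiHom_injective <| by
    rw [← AlgHom.comp_apply, ← σ.symm_symm, ← signedPermAlgHom_comp_phiHom, AlgHom.comp_apply, hP]

lemma invariant_iff_mem_adjoin_sigmaB (p : AddMonoidAlgebra ℤ (Fin n → ℤ)) :
    (∀ ε π, signedPermAlgHom ε π p = p) ↔ p ∈ Algebra.adjoin ℤ (Set.range (sigmaB n)) := by
  refine ⟨fun hp => ?_, fun hp ε π => ?_⟩
  · obtain ⟨P, rfl⟩ := mem_range_phiHom_of_signInvariant fun ε => hp ε 1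
    obtain ⟨Q, hQ⟩ := (esymmAlgHom_fin_bijective ℤ n).2
      ⟨P, isSymmetric_of_phiHom_invariant fun π => hp 1 π⟩
    rw [Algebra.adjoin_range_eq_range_aeval, aeval_sigmaB_eq]
    exact ⟨Q, by simp [hQ]⟩
  · refine Algebra.adjoin_le (S := AlgHom.equalizer (signedPermAlgHom ε π) (AlgHom.id ℤ _)) ?_ hp
    rintro _ ⟨i, rfl⟩
    exact signedPermAlgHom_sigmaB ε π i

end BnWeyl

open BnWeyl

/-- Multiplicative invariants of the lattice `Bₙ = ℤⁿ` under the Weyl group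
`W = {±1}ⁿ ⋊ Sₙ` of type `Bₙ`: a Laurent polynomial `p ∈ ℤ[x₁^{±1},…,xₙ^{±1}]` is invariant
under all signed permutations of the variables iff it lies in the subalgebra generated by the
elementary symmetric functions `σ₁,…,σₙ` of `φⱼ = xⱼ + xⱼ⁻¹`; moreover the `σᵢ` are
algebraically independent over `ℤ`. -/
theorem Bn_weyl_invariants (n : ℕ) :
    (∀ p : AddMonoidAlgebra ℤ (Fin n → ℤ),
      (∀ (ε : Fin n → ℤˣ) (π : Equiv.Perm (Fin n)),
        Finsupp.mapDomain (fun v : Fin n → ℤ => fun i => (ε i : ℤ) * v (π i)) p.coeff = p.coeff) ↔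
      p ∈ Algebra.adjoin ℤ (Set.range (sigmaB n))) ∧
    AlgebraicIndependent ℤ (sigmaB n) := by
  refine ⟨fun p => ?_, ?_⟩
  · simp_rw [← coeff_signedPermAlgHom, AddMonoidAlgebra.coeff_inj]
    exact invariant_iff_mem_adjoin_sigmaB p
  · rw [algebraicIndependent_iff_injective_aeval, aeval_sigmaB_eq]
    exact phiHom_injective.comp (Subtype.val_injective.comp (esymmAlgHom_fin_bijective ℤ n).1)
end

section
/- For $n \ge 2$, the monomials $s_1^{l_1} s_2^{l_2} \cdots s_{n-1}^{l_{n-1}} s_n^{-l_n}$, where $l_1,\dots,l_{n-1} \in \mathbb{Z}_{\ge 0}$ and $l_n = \frac{1}{n}\sum_{i=1}^{n-1} i l_i \in \mathbb{Z}$, form a $\mathbb{Z}$-basis of the degree-zero component of $\mathbb{Z}[s_1,\dots,s_{n-1},s_n^{\pm 1}]$, where $s_i$ is the $i$-th elementary symmetric polynomial in $x_1,\dots,x_n$ and the grading is by total degree in the $x_i$. Consequently this ring is isomorphic to the monoid algebra $\mathbb{Z}[M_{n-1}]$ with $M_{n-1} = \{(l_1,\dots,l_{n-1}) \in \mathbb{Z}_+^{n-1}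 \mid \sum_{i=1}^{n-1} i l_i \equiv 0 \pmod n\}$. -/
open Finset

/-- The `i`-th elementary symmetric polynomial `sᵢ` in `x₁,…,xₙ` (the index `i : Fin n`
corresponds to the classical index `i+1 ∈ {1,…,n}`). -/
noncomputable def esymB (n : ℕ) (i : Fin n) : AddMonoidAlgebra ℤ (Fin n → ℤ) :=
  ∑ A ∈ Finset.powersetCard (i.1 + 1) (Finset.univ : Finset (Fin n)),
    ∏ j ∈ A, mono n (Pi.single j 1)

/-- The inverse `sₙ⁻¹ = x₁⁻¹⋯xₙ⁻¹` of the top elementary symmetric polynomial. -/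
noncomputable def esymTopInv (n : ℕ) : AddMonoidAlgebra ℤ (Fin n → ℤ) :=
  mono n (fun _ => -1)

/-- The monoid `M_{n-1} = {(l₁,…,l_{n-1}) ∈ ℤ₊^{n-1} | ∑ i·lᵢ ≡ 0 (mod n)}`
(the `Fin (n-1)`-index `i` corresponds to the classical index `i+1`). -/
def Mmon (n : ℕ) : AddSubmonoid (Fin (n - 1) → ℕ) where
  carrier := {l | n ∣ ∑ i, (i.1 + 1) * l i}
  zero_mem' := by simp
  add_mem' := by
    intro a b ha hb
    have : (∑ i, (i.1 + 1) * (a + b) i) = (∑ i, (i.1 + 1) * a i) + ∑ i, (i.1 + 1) * b i := by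
      simp [Pi.add_apply, mul_add, Finset.sum_add_distrib]
    show n ∣ ∑ i, (i.1 + 1) * (a + b) i
    rw [this]
    exact Nat.dvd_add ha hb

/-- The monomial `s₁^{l₁} ⋯ s_{n-1}^{l_{n-1}} / sₙ^{lₙ}` with `lₙ = (∑ i·lᵢ)/n`. -/
noncomputable def basisElt (n : ℕ) (l : Mmon n) : AddMonoidAlgebra ℤ (Fin n → ℤ) :=
  (∏ i : Fin (n - 1), esymB n (Fin.castLE (Nat.sub_le n 1) i) ^ (l.1 i)) *
    esymTopInv n ^ ((∑ i, (i.1 + 1) * l.1 i) / n)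

/-!
Every element of `ℤ[s₁,…,s_{n-1},sₙ^{±1}]` is a `ℤ`-combination of monomials `s^a sₙ^{-k}`,
and such a monomial is homogeneous of degree `∑ i aᵢ - n k`. Projecting onto degree zero
therefore keeps exactly the monomials with `∑ i aᵢ = n k`, and cancelling `sₙ^{aₙ}` against
`sₙ^{-k}` turns each of them into one of the `s₁^{l₁}⋯s_{n-1}^{l_{n-1}} sₙ^{-lₙ}`. Finitely many
of these become distinct monomials in `s₁,…,sₙ` after multiplication by a large power of `sₙ`,
and `s₁,…,sₙ` are algebraically independent, so they are linearly independent; hence the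
algebra map out of `ℤ[M_{n-1}]` that sends its basis to them is injective.
-/

open AddMonoidAlgebra

def totalDegreeHom (σ : Type*) [Fintype σ] : (σ → ℤ) →+ ℤ where
  toFun v := ∑ i, v i
  map_zero' := by simp
  map_add' v w := by simp [sum_add_distrib]

abbrev totalDegreeGrade (n : ℕ) : ℤ → Submodule ℤ (AddMonoidAlgebra ℤ (Fin n → ℤ)) :=
  gradeBy ℤ (totalDegreeHom (Fin n))

lemma mem_totalDegreeGrade_zero_iff {n : ℕ} (p : AddMonoidAlgebra ℤ (Fin n → ℤ)) :
    p ∈ totalDegreeGrade n 0 ↔ ∀ v : Fin n → ℤ, ∑ i, v i ≠ 0 → p.coeff v = 0 := by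
  refine forall_congr' fun v => ?_
  rw [Finsupp.mem_support_iff, not_imp_comm]
  rfl

def weight {m : ℕ} (a : Fin m → ℕ) : ℕ := ∑ i : Fin m, (i.1 + 1) * a i

lemma weight_add {m : ℕ} (a b : Fin m → ℕ) : weight (a + b) = weight a + weight b := by
  simp only [weight, Pi.add_apply, mul_add, sum_add_distrib]

lemma weight_snoc {N : ℕ} (a : Fin N → ℕ) (c : ℕ) :
    weight (Fin.snoc a c : Fin (N + 1) → ℕ) = weight a + (N + 1) * c := by
  simp [weight, Fin.sum_univ_castSucc]

lemma Mmon.dvd_weight {n : ℕ} (l : Mmon n) : n ∣ weight l.1 := l.2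

lemma pow_mul_pow_eq_pow_sub_of_mul_eq_one {M : Type*} [CommMonoid M] {a b : M}
    (hab : a * b = 1) {c k : ℕ} (h : k ≤ c) : a ^ c * b ^ k = a ^ (c - k) := by
  obtain ⟨d, rfl⟩ := Nat.exists_eq_add_of_le h
  rw [pow_add, mul_right_comm, ← mul_pow, hab, one_pow, one_mul, Nat.add_sub_cancel_left]

lemma pow_mul_pow_eq_pow_sub_of_mul_eq_one' {M : Type*} [CommMonoid M] {a b : M}
    (hab : a * b = 1) {c k : ℕ} (h : c ≤ k) : a ^ c * b ^ k = b ^ (k - c) := by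
  rw [mul_comm, pow_mul_pow_eq_pow_sub_of_mul_eq_one (by rwa [mul_comm]) h]

section Monomials

variable {n : ℕ}

lemma mono_mul (v w : Fin n → ℤ) : mono n v * mono n w = mono n (v + w) := by
  simp [mono, single_mul_single]

lemma prod_mono {ι : Type*} (s : Finset ι) (v : ι → Fin n → ℤ) :
    ∏ j ∈ s, mono n (v j) = mono n (∑ j ∈ s, v j) := by
  simp [mono]

lemma mono_mem_totalDegreeGrade (v : Fin n → ℤ) : mono n v ∈ totalDegreeGrade n (∑ i, v i) :=
  single_mem_gradeBy _ v 1

lemma esymB_mem_totalDegreeGrade (i : Fin n) : esymB n i ∈ totalDegreeGrade n (i.1 + 1) := by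
  refine Submodule.sum_mem _ fun A hA => ?_
  rw [prod_mono]
  convert mono_mem_totalDegreeGrade _
  simp [Finset.sum_apply, Pi.single_apply, (mem_powersetCard.mp hA).2]

lemma esymTopInv_mem_totalDegreeGrade : esymTopInv n ∈ totalDegreeGrade n (-n) := by
  simpa [esymTopInv] using mono_mem_totalDegreeGrade (n := n) (fun _ => -1)

lemma esymB_last (N : ℕ) : esymB (N + 1) (Fin.last N) = mono (N + 1) 1 := by
  have hcard : (Fin.last N).1 + 1 = #(univ : Finset (Fin (N + 1))) := by simp
  rw [esymB, hcard, powersetCard_self, sum_singleton, prod_mono]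
  congr 1
  ext i
  simp [Finset.sum_apply, Pi.single_apply]

lemma esymB_last_mul_esymTopInv (N : ℕ) :
    esymB (N + 1) (Fin.last N) * esymTopInv (N + 1) = 1 := by
  rw [esymB_last, esymTopInv, mono_mul, one_def]
  congr 1

end Monomials

def natCastExponents (σ : Type*) : (σ →₀ ℕ) →+ (σ → ℤ) where
  toFun t i := t i
  map_zero' := by ext; simp
  map_add' s t := by ext; simp

noncomputable def mvPolynomialToLaurent (σ : Type*) (R : Type*) [CommSemiring R] :
    MvPolynomial σ R →ₐ[R] AddMonoidAlgebra R (σ → ℤ) :=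
  mapDomainAlgHom R R (natCastExponents σ)

lemma mvPolynomialToLaurent_injective (σ : Type*) (R : Type*) [CommSemiring R] :
    Function.Injective (mvPolynomialToLaurent σ R) :=
  mapDomain_injective fun s t h => Finsupp.ext fun i => by
    simpa [natCastExponents] using congrFun h i

lemma mvPolynomialToLaurent_X {n : ℕ} (j : Fin n) :
    mvPolynomialToLaurent (Fin n) ℤ (MvPolynomial.X j) = mono n (Pi.single j 1) := by
  rw [mvPolynomialToLaurent, mapDomainAlgHom_apply, MvPolynomial.X,
    ← MvPolynomial.single_eq_monomial, mapDomain_single, mono]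
  congr 1
  ext i
  simp [natCastExponents, Finsupp.single_apply, Pi.single_apply, eq_comm]

lemma algebraicIndependent_esymm (R : Type*) [CommRing R] (n : ℕ) :
    AlgebraicIndependent R (fun i : Fin n => MvPolynomial.esymm (Fin n) R (i + 1)) :=
  fun p q h => MvPolynomial.esymmAlgHom_fin_injective R le_rfl <| Subtype.ext <| by
    rwa [MvPolynomial.esymmAlgHom_apply, MvPolynomial.esymmAlgHom_apply]

lemma algebraicIndependent_esymB (n : ℕ) : AlgebraicIndependent ℤ (esymB n) := by
  convert (algebraicIndependent_esymm ℤ n).map' (mvPolynomialToLaurent_injective (Fin n) ℤ)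
  funext i
  simp [esymB, MvPolynomial.esymm, mvPolynomialToLaurent_X]

lemma AlgebraicIndependent.linearIndependent_prod_pow {ι R A : Type*} [Fintype ι] [CommRing R]
    [CommRing A] [Algebra R A] {x : ι → A} (hx : AlgebraicIndependent R x) :
    LinearIndependent R (fun a : ι → ℕ => ∏ i, x i ^ a i) := by
  have := ((MvPolynomial.basisMonomials ι R).linearIndependent.map'
    (MvPolynomial.aeval x).toLinearMap (LinearMap.ker_eq_bot.mpr hx)).comp _
    Finsupp.equivFunOnFinite.symm.injective
  have hfun : ((MvPolynomial.aeval x).toLinearMap ∘ MvPolynomial.basisMonomials ι R) ∘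
      Finsupp.equivFunOnFinite.symm = fun a : ι → ℕ => ∏ i, x i ^ a i := by
    funext a
    simp [MvPolynomial.aeval_monomial, Finsupp.prod_fintype]
  rwa [hfun] at this

noncomputable def esymMonomial (n : ℕ) (a : Fin n → ℕ) (k : ℕ) :
    AddMonoidAlgebra ℤ (Fin n → ℤ) :=
  (∏ i, esymB n i ^ a i) * esymTopInv n ^ k

lemma esymMonomial_mem_totalDegreeGrade {n : ℕ} (a : Fin n → ℕ) (k : ℕ) :
    esymMonomial n a k ∈ totalDegreeGrade n ((weight a : ℤ) - n * k) := by
  have h := SetLike.mul_mem_graded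
    (SetLike.prod_pow_mem_graded (F := univ) _ _ _ a fun i _ => esymB_mem_totalDegreeGrade i)
    (SetLike.pow_mem_graded k (esymTopInv_mem_totalDegreeGrade (n := n)))
  rw [esymMonomial]
  convert h using 2
  simp [weight, sub_eq_add_neg, mul_comm]

section Basis

variable {N : ℕ}

lemma basisElt_eq_esymMonomial (l : Mmon (N + 1)) :
    basisElt (N + 1) l =
      esymMonomial (N + 1) (Fin.snoc (l.1 : Fin N → ℕ) 0) (weight l.1 / (N + 1)) := by
  rw [esymMonomial, Fin.prod_univ_castSucc]
  simp only [Fin.snoc_castSucc, Fin.snoc_last, pow_zero, mul_one]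
  rfl

lemma basisElt_mem_totalDegreeGrade_zero (l : Mmon (N + 1)) :
    basisElt (N + 1) l ∈ totalDegreeGrade (N + 1) 0 := by
  have h := esymMonomial_mem_totalDegreeGrade (Fin.snoc (l.1 : Fin N → ℕ) 0 : Fin (N + 1) → ℕ)
    (weight l.1 / (N + 1))
  rwa [← basisElt_eq_esymMonomial, weight_snoc, mul_zero, add_zero, ← Nat.cast_mul,
    Nat.mul_div_cancel' (Mmon.dvd_weight l), sub_self] at h

lemma esymMonomial_snoc (b : Fin N → ℕ) {c k : ℕ} (h : c ≤ k) :
    esymMonomial (N + 1) (Fin.snoc b c) k = esymMonomial (N + 1) (Fin.snoc b 0) (k - c) := by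
  simp only [esymMonomial, Fin.prod_univ_castSucc, Fin.snoc_castSucc, Fin.snoc_last, pow_zero,
    mul_one, mul_assoc]
  rw [pow_mul_pow_eq_pow_sub_of_mul_eq_one' (esymB_last_mul_esymTopInv N) h]

lemma exists_basisElt_eq_esymMonomial {a : Fin (N + 1) → ℕ} {k : ℕ}
    (h : weight a = (N + 1) * k) :
    ∃ l : Mmon (N + 1), basisElt (N + 1) l = esymMonomial (N + 1) a k := by
  have hsplit : weight (Fin.init a) + (N + 1) * a (Fin.last N) = (N + 1) * k := by
    rw [← weight_snoc, Fin.snoc_init_self, h]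
  have hle : a (Fin.last N) ≤ k := Nat.le_of_mul_le_mul_left (by omega) N.add_one_pos
  have hinit : weight (Fin.init a) = (N + 1) * (k - a (Fin.last N)) := by
    rw [Nat.mul_sub]
    omega
  refine ⟨⟨Fin.init a, ⟨_, hinit⟩⟩, ?_⟩
  conv_rhs => rw [← Fin.snoc_init_self a, esymMonomial_snoc _ hle]
  rw [basisElt_eq_esymMonomial]
  dsimp only
  rw [hinit, Nat.mul_div_cancel_left _ N.add_one_pos]

lemma esymB_last_pow_mul_basisElt (l : Mmon (N + 1)) {K : ℕ} (hK : weight l.1 / (N + 1) ≤ K) :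
    esymB (N + 1) (Fin.last N) ^ K * basisElt (N + 1) l =
      ∏ i, esymB (N + 1) i ^
        (Fin.snoc (l.1 : Fin N → ℕ) (K - weight l.1 / (N + 1)) : Fin (N + 1) → ℕ) i := by
  rw [basisElt_eq_esymMonomial]
  simp only [esymMonomial, Fin.prod_univ_castSucc, Fin.snoc_castSucc, Fin.snoc_last, pow_zero,
    mul_one]
  rw [mul_left_comm, pow_mul_pow_eq_pow_sub_of_mul_eq_one (esymB_last_mul_esymTopInv N) hK]

end Basis

lemma linearIndependent_basisElt (N : ℕ) : LinearIndependent ℤ (basisElt (N + 1)) := by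
  rw [linearIndependent_iff_finset_linearIndependent]
  intro s
  set K := s.sup fun l => weight l.1 / (N + 1)
  set e : s → Fin (N + 1) → ℕ := fun l =>
    Fin.snoc (l.1.1 : Fin N → ℕ) (K - weight l.1.1 / (N + 1))
  have he : Function.Injective e := fun l l' h =>
    Subtype.ext (Subtype.ext (Fin.snoc_injective2 h).1)
  set φ := LinearMap.mulLeft ℤ (esymB (N + 1) (Fin.last N) ^ K)
  apply LinearIndependent.of_comp φ
  have hφ : φ ∘ basisElt (N + 1) ∘ Subtype.val = (fun a => ∏ i, esymB (N + 1) i ^ a i) ∘ e :=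
    funext fun l => esymB_last_pow_mul_basisElt l.1 (le_sup (f := fun l => weight l.1 / _) l.2)
  rw [hφ]
  exact (algebraicIndependent_esymB (N + 1)).linearIndependent_prod_pow.comp e he

lemma basisElt_zero (n : ℕ) : basisElt n 0 = 1 := by
  simp [basisElt]

lemma basisElt_add {n : ℕ} (a b : Mmon n) :
    basisElt n (a + b) = basisElt n a * basisElt n b := by
  have hdiv : weight (a + b).1 / n = weight a.1 / n + weight b.1 / n := by
    rw [AddSubmonoid.coe_add, weight_add, Nat.add_div_of_dvd_right (Mmon.dvd_weight a)]
  simp only [basisElt, weight] at hdiv ⊢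
  rw [hdiv, pow_add, AddSubmonoid.coe_add]
  simp only [Pi.add_apply, pow_add, prod_mul_distrib]
  ring

noncomputable def basisEltHom (n : ℕ) :
    Multiplicative (Mmon n) →* AddMonoidAlgebra ℤ (Fin n → ℤ) where
  toFun l := basisElt n l.toAdd
  map_one' := basisElt_zero n
  map_mul' a b := basisElt_add a.toAdd b.toAdd

lemma AddMonoidAlgebra.lift_injective_of_linearIndependent {R A M : Type*} [CommSemiring R]
    [Semiring A] [Algebra R A] [AddMonoid M] {F : Multiplicative M →* A}
    (hF : LinearIndependent R fun m : M => F (.ofAdd m)) :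
    Function.Injective (AddMonoidAlgebra.lift R A M F) := by
  have h (p : AddMonoidAlgebra R M) :
      AddMonoidAlgebra.lift R A M F p =
        Finsupp.linearCombination R (fun m : M => F (.ofAdd m)) p.coeff := by
    rw [AddMonoidAlgebra.lift_apply, Finsupp.linearCombination_apply]
  intro p q hpq
  exact AddMonoidAlgebra.coeff_injective (hF (by rwa [h, h] at hpq))

lemma Submonoid.exists_of_mem_closure_insert_range {M ι : Type*} [CommMonoid M] [Fintype ι]
    {u : M} {f : ι → M} {x : M} (hx : x ∈ closure (insert u (Set.range f))) :
    ∃ (a : ι → ℕ) (k : ℕ), x = (∏ i, f i ^ a i) * u ^ k := by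
  rw [Set.insert_eq, closure_union, mem_sup] at hx
  obtain ⟨y, hy, z, hz, rfl⟩ := hx
  obtain ⟨k, rfl⟩ := mem_closure_singleton.mp hy
  obtain ⟨a, rfl⟩ := exists_of_mem_closure_range f z hz
  exact ⟨a, k, mul_comm _ _⟩

section Span

variable {N : ℕ}

local notation "S" => insert (esymTopInv (N + 1)) (Set.range (esymB (N + 1)))

lemma mem_span_basisElt_of_mem_adjoin {p : AddMonoidAlgebra ℤ (Fin (N + 1) → ℤ)}
    (hp : p ∈ Algebra.adjoin ℤ S) (h0 : p ∈ totalDegreeGrade (N + 1) 0) :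
    p ∈ Submodule.span ℤ (Set.range (basisElt (N + 1))) := by
  have hproj : (Submonoid.closure S : Set (AddMonoidAlgebra ℤ (Fin (N + 1) → ℤ))) ⊆
      Submodule.comap (GradedAlgebra.proj (totalDegreeGrade (N + 1)) 0)
        (Submodule.span ℤ (Set.range (basisElt (N + 1)))) := by
    intro x hx
    obtain ⟨a, k, rfl⟩ := Submonoid.exists_of_mem_closure_insert_range hx
    change esymMonomial (N + 1) a k ∈ Submodule.comap _ _
    have hdeg := esymMonomial_mem_totalDegreeGrade a k
    rw [Submodule.mem_comap, GradedAlgebra.proj_apply]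
    by_cases hw : weight a = (N + 1) * k
    · obtain ⟨l, hl⟩ := exists_basisElt_eq_esymMonomial hw
      rw [hw, Nat.cast_mul, Nat.cast_add_one, sub_self] at hdeg
      rw [DirectSum.decompose_of_mem_same _ hdeg]
      exact Submodule.subset_span ⟨l, hl⟩
    · rw [DirectSum.decompose_of_mem_ne _ hdeg (sub_ne_zero.mpr (by exact_mod_cast hw))]
      exact Submodule.zero_mem _
  rw [← Subalgebra.mem_toSubmodule, Algebra.adjoin_eq_span] at hp
  rw [← DirectSum.decompose_of_mem_same _ h0, ← GradedAlgebra.proj_apply]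
  exact Submodule.span_le.mpr hproj hp

lemma basisElt_mem_adjoin (l : Mmon (N + 1)) : basisElt (N + 1) l ∈ Algebra.adjoin ℤ S :=
  mul_mem
    (prod_mem fun _ _ =>
      pow_mem (Algebra.subset_adjoin (Set.mem_insert_of_mem _ (Set.mem_range_self _))) _)
    (pow_mem (Algebra.subset_adjoin (Set.mem_insert _ _)) _)

lemma span_basisElt_le :
    Submodule.span ℤ (Set.range (basisElt (N + 1))) ≤
      Subalgebra.toSubmodule (Algebra.adjoin ℤ S) ⊓ totalDegreeGrade (N + 1) 0 :=
  Submodule.span_le.mpr <| Set.range_subset_iff.mpr fun l =>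
    ⟨basisElt_mem_adjoin l, basisElt_mem_totalDegreeGrade_zero l⟩

end Span

/-- The monomials `s₁^{l₁}⋯s_{n-1}^{l_{n-1}} sₙ^{-lₙ}` with `(l₁,…,l_{n-1}) ∈ M_{n-1}` and
`lₙ = (∑ i lᵢ)/n` form a `ℤ`-basis of the degree-zero component (with respect to total degree
in the `xᵢ`) of `ℤ[s₁,…,s_{n-1},sₙ^{±1}]`: they are linearly independent, and their
`ℤ`-span is exactly the set of elements of `ℤ[s₁,…,s_{n-1},sₙ^{±1}]` supported on monomials
of total degree zero. Consequently the degree-zero component is isomorphic to the monoid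
algebra `ℤ[M_{n-1}]`, via the injective algebra map sending the basis of `ℤ[M_{n-1}]` to
these monomials. -/
theorem An_degree_zero_basis (n : ℕ) (hn : 2 ≤ n) :
    LinearIndependent ℤ (basisElt n) ∧
    (∀ p : AddMonoidAlgebra ℤ (Fin n → ℤ),
      (p ∈ Algebra.adjoin ℤ (insert (esymTopInv n) (Set.range (esymB n))) ∧
        ∀ v : Fin n → ℤ, (∑ i, v i) ≠ 0 → (p.coeff : (Fin n → ℤ) →₀ ℤ) v = 0) ↔
      p ∈ Submodule.span ℤ (Set.range (basisElt n))) ∧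
    ∃ f : AddMonoidAlgebra ℤ (Mmon n) →ₐ[ℤ] AddMonoidAlgebra ℤ (Fin n → ℤ),
      Function.Injective f ∧ ∀ l : Mmon n, f (AddMonoidAlgebra.single l 1) = basisElt n l := by
  obtain ⟨N, rfl⟩ : ∃ N, n = N + 1 := ⟨n - 1, by omega⟩
  refine ⟨linearIndependent_basisElt N, fun p => ?_,
    AddMonoidAlgebra.lift ℤ _ _ (basisEltHom (N + 1)),
    AddMonoidAlgebra.lift_injective_of_linearIndependent (linearIndependent_basisElt N),
    fun l => by simp [basisEltHom]⟩
  rw [← mem_totalDegreeGrade_zero_iff]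
  exact ⟨fun h => mem_span_basisElt_of_mem_adjoin h.1 h.2, fun h => span_basisElt_le h⟩
end

section
/- The multiplicative invariant algebra of the root lattice $A_2$ under $S_3$ satisfies $\mathbb{Z}[A_2]^{S_3} \cong \mathbb{Z}[x,y,z]/(z^3 - xy)$. Equivalently, the monoid $M_2 = \{(l_1,l_2) \in \mathbb{Z}_+^2 \mid l_1 + 2 l_2 \equiv 0 \pmod 3\}$ has Hilbert basis $\{(1,1),(3,0),(0,3)\}$ and its monoid algebra over $\mathbb{Z}$ is $\mathbb{Z}[x,y,z]/(z^3 - xy)$ via $x \mapsto (3,0)$, $y \mapsto (0,3)$, $z \mapsto (1,1)$. -/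
open MvPolynomial

/-- The monoid `M₂ = {(l₁,l₂) ∈ ℤ₊² | l₁ + 2l₂ ≡ 0 (mod 3)}`. -/
def M2 : AddSubmonoid (ℕ × ℕ) where
  carrier := {l | 3 ∣ (l.1 + 2 * l.2)}
  zero_mem' := by simp
  add_mem' := by
    intro a b ha hb
    have : (a + b).1 + 2 * (a + b).2 = (a.1 + 2 * a.2) + (b.1 + 2 * b.2) := by
      simp only [Prod.fst_add, Prod.snd_add]; ring
    show 3 ∣ (a + b).1 + 2 * (a + b).2
    rw [this]
    exact Nat.dvd_add ha hb

/-- The ideal `(z³ - xy)` of `ℤ[x,y,z]`. -/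
noncomputable def relIdeal : Ideal (MvPolynomial (Fin 3) ℤ) :=
  Ideal.span {(X 2 : MvPolynomial (Fin 3) ℤ) ^ 3 - X 0 * X 1}

/-! Every element of `M2` is `(c + 3p, c + 3q) = c • (1,1) + p • (3,0) + q • (0,3)`, so `M2`
is generated by these three elements and its indecomposables are among them. Choosing `p = 0` or
`q = 0` makes this normal form canonical, and because `3 • (1,1) = (3,0) + (0,3)` it turns
`z ^ c * x ^ p * y ^ q` into a multiplicative function on `M2` whenever `z³ = xy`: this gives the
inverse of the obvious map `ℤ[x,y,z]/(z³ - xy) → ℤ[M₂]`. -/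

open AddMonoidAlgebra

/-- The Hilbert basis of a positive affine monoid `S`. -/
def AddSubmonoid.indecomposables {M : Type*} [AddMonoid M] (S : AddSubmonoid M) : Set M :=
  {m | m ∈ S ∧ m ≠ 0 ∧ ∀ a b : M, a ∈ S → b ∈ S → a + b = m → a = 0 ∨ b = 0}

theorem AddSubmonoid.indecomposables_closure_subset {M : Type*} [AddMonoid M] (s : Set M) :
    (AddSubmonoid.closure s).indecomposables ⊆ s := by
  intro m hm
  induction hm.1 using AddSubmonoid.closure_induction with
  | mem m hms => exact hms
  | zero => exact (hm.2.1 rfl).elim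
  | add a b ha hb iha ihb =>
    rcases hm.2.2 a b ha hb rfl with rfl | rfl
    · simpa using ihb (by simpa using hm)
    · simpa using iha (by simpa using hm)

namespace M2

theorem mem_iff {m : ℕ × ℕ} : m ∈ M2 ↔ 3 ∣ m.1 + 2 * m.2 := Iff.rfl

theorem exists_eq_of_mem {m : ℕ × ℕ} (hm : m ∈ M2) :
    ∃ c p q : ℕ, m = (c + 3 * p, c + 3 * q) := by
  have := mem_iff.1 hm
  exact ⟨min m.1 m.2, (m.1 - m.2) / 3, (m.2 - m.1) / 3, by ext <;> simp <;> omega⟩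

theorem eq_closure : M2 = AddSubmonoid.closure {(1, 1), (3, 0), (0, 3)} := by
  refine le_antisymm (fun m hm => ?_) (AddSubmonoid.closure_le.2 ?_)
  · obtain ⟨c, p, q, rfl⟩ := exists_eq_of_mem hm
    have h : ((c + 3 * p, c + 3 * q) : ℕ × ℕ) =
        c • (1, 1) + p • (3, 0) + q • (0, 3) := by
      ext <;> simp [mul_comm]
    rw [h]
    refine add_mem (add_mem ?_ ?_) ?_ <;> exact nsmul_mem (AddSubmonoid.subset_closure (by simp)) _
  · rintro _ (rfl | rfl | rfl) <;> exact mem_iff.2 (by norm_num)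

theorem indecomposables_eq : M2.indecomposables = {(1, 1), (3, 0), (0, 3)} := by
  refine (eq_closure ▸ AddSubmonoid.indecomposables_closure_subset _).antisymm ?_
  rintro _ (rfl | rfl | rfl) <;> refine ⟨mem_iff.2 (by norm_num), by simp, ?_⟩ <;>
    rintro ⟨a₁, a₂⟩ ⟨b₁, b₂⟩ ha hb hab <;>
    simp only [mem_iff, Prod.mk_add_mk, Prod.mk.injEq, Prod.mk_eq_zero] at ha hb hab ⊢ <;> grind

section lift

variable {R : Type*} [CommMonoid R] {x y z : R}

/-- `z ^ c * x ^ p * y ^ q`, where `m = (c + 3p, c + 3q)` is written with `p = 0` or `q = 0`. -/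
def liftFun (x y z : R) (m : ℕ × ℕ) : R :=
  z ^ min m.1 m.2 * x ^ ((m.1 - m.2) / 3) * y ^ ((m.2 - m.1) / 3)

theorem liftFun_eq (h : z ^ 3 = x * y) (c p q : ℕ) :
    liftFun x y z (c + 3 * p, c + 3 * q) = z ^ c * x ^ p * y ^ q := by
  wlog hpq : p ≤ q generalizing x y p q
  · have := this (h.trans (mul_comm x y)) q p (by omega)
    simp only [liftFun, min_comm (c + 3 * p)] at this ⊢
    rw [mul_right_comm, this, mul_right_comm]
  obtain ⟨k, rfl⟩ := Nat.exists_eq_add_of_le hpq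
  have h₁ : min (c + 3 * p) (c + 3 * (p + k)) = c + 3 * p := by omega
  have h₂ : (c + 3 * p - (c + 3 * (p + k))) / 3 = 0 := by omega
  have h₃ : (c + 3 * (p + k) - (c + 3 * p)) / 3 = k := by omega
  simp only [liftFun, h₁, h₂, h₃, pow_add, pow_mul, h, mul_pow, pow_zero, mul_one]
  ac_rfl

theorem liftFun_add (h : z ^ 3 = x * y) {m n : ℕ × ℕ} (hm : m ∈ M2) (hn : n ∈ M2) :
    liftFun x y z (m + n) = liftFun x y z m * liftFun x y z n := by
  obtain ⟨c, p, q, rfl⟩ := exists_eq_of_mem hm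
  obtain ⟨c', p', q', rfl⟩ := exists_eq_of_mem hn
  have hmn : ((c + 3 * p, c + 3 * q) + (c' + 3 * p', c' + 3 * q') : ℕ × ℕ) =
      (c + c' + 3 * (p + p'), c + c' + 3 * (q + q')) := by
    ext <;> simp only [Prod.fst_add, Prod.snd_add] <;> ring
  rw [hmn, liftFun_eq h, liftFun_eq h, liftFun_eq h]
  simp only [pow_add]
  ac_rfl

/-- `M2` is presented, as a commutative monoid, by generators `(3,0), (0,3), (1,1)` subject to
`3 • (1,1) = (3,0) + (0,3)`. -/
def lift (h : z ^ 3 = x * y) : Multiplicative M2 →* R where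
  toFun m := liftFun x y z m.toAdd
  map_one' := by simp [liftFun]
  map_mul' m n := liftFun_add h m.toAdd.2 n.toAdd.2

theorem lift_ofAdd (h : z ^ 3 = x * y) (m : M2) :
    lift h (Multiplicative.ofAdd m) = liftFun x y z m := rfl

end lift

end M2

section quotient

variable {A : Type*} [CommRing A] [Algebra ℤ A] {x y z : A}

theorem relIdeal_mk_X_two_pow_three :
    Ideal.Quotient.mk relIdeal (X 2) ^ 3 =
      Ideal.Quotient.mk relIdeal (X 0) * Ideal.Quotient.mk relIdeal (X 1) := by
  rw [← map_pow, ← map_mul, Ideal.Quotient.eq]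
  exact Ideal.subset_span rfl

noncomputable def relIdealLift (h : z ^ 3 = x * y) :
    (MvPolynomial (Fin 3) ℤ ⧸ relIdeal) →ₐ[ℤ] A :=
  Ideal.Quotient.liftₐ relIdeal (aeval ![x, y, z]) fun a ha => by
    obtain ⟨t, rfl⟩ := Ideal.mem_span_singleton'.1 ha
    simp [h]

@[simp]
theorem relIdealLift_mk_X (h : z ^ 3 = x * y) (i : Fin 3) :
    relIdealLift h (Ideal.Quotient.mk relIdeal (X i)) = ![x, y, z] i :=
  aeval_X _ _

end quotient

namespace M2

def gen30 : M2 := ⟨(3, 0), mem_iff.2 (by norm_num)⟩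
def gen03 : M2 := ⟨(0, 3), mem_iff.2 (by norm_num)⟩
def gen11 : M2 := ⟨(1, 1), mem_iff.2 (by norm_num)⟩

theorem single_gen11_pow_three :
    (single gen11 1 : AddMonoidAlgebra ℤ M2) ^ 3 = single gen30 1 * single gen03 1 := by
  rw [single_pow, single_mul_single, one_pow, mul_one]
  rfl

theorem single_eq {m : M2} {c p q : ℕ} (hm : (m : ℕ × ℕ) = (c + 3 * p, c + 3 * q)) :
    (single m 1 : AddMonoidAlgebra ℤ M2) =
      single gen11 (1 : ℤ) ^ c * single gen30 (1 : ℤ) ^ p * single gen03 (1 : ℤ) ^ q := by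
  simp only [single_pow, single_mul_single, one_pow, mul_one]
  congr
  ext <;> simp [hm, gen11, gen30, gen03, mul_comm]

end M2

noncomputable def toMonoidAlgebra :
    (MvPolynomial (Fin 3) ℤ ⧸ relIdeal) →ₐ[ℤ] AddMonoidAlgebra ℤ M2 :=
  relIdealLift M2.single_gen11_pow_three

noncomputable def ofMonoidAlgebra :
    AddMonoidAlgebra ℤ M2 →ₐ[ℤ] (MvPolynomial (Fin 3) ℤ ⧸ relIdeal) :=
  AddMonoidAlgebra.lift ℤ _ M2 (M2.lift relIdeal_mk_X_two_pow_three)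

theorem ofMonoidAlgebra_single (m : M2) :
    ofMonoidAlgebra (single m 1) =
      M2.liftFun (Ideal.Quotient.mk relIdeal (X 0)) (Ideal.Quotient.mk relIdeal (X 1))
        (Ideal.Quotient.mk relIdeal (X 2)) m := by
  rw [ofMonoidAlgebra, lift_single, one_smul, M2.lift_ofAdd]

theorem toMonoidAlgebra_comp_ofMonoidAlgebra :
    toMonoidAlgebra.comp ofMonoidAlgebra = AlgHom.id ℤ (AddMonoidAlgebra ℤ M2) := by
  refine AddMonoidAlgebra.algHom_ext (fun m => ?_) (Subsingleton.elim _ _)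
  obtain ⟨c, p, q, hm⟩ := M2.exists_eq_of_mem m.2
  rw [AlgHom.comp_apply, ofMonoidAlgebra_single, hm, M2.liftFun_eq relIdeal_mk_X_two_pow_three,
    AlgHom.id_apply, M2.single_eq hm]
  simp [toMonoidAlgebra]

theorem ofMonoidAlgebra_comp_toMonoidAlgebra :
    ofMonoidAlgebra.comp toMonoidAlgebra =
      AlgHom.id ℤ (MvPolynomial (Fin 3) ℤ ⧸ relIdeal) := by
  refine Ideal.Quotient.algHom_ext _ (MvPolynomial.algHom_ext fun i => ?_)
  simp only [AlgHom.comp_apply, Ideal.Quotient.mkₐ_eq_mk, AlgHom.id_apply]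
  rw [toMonoidAlgebra, relIdealLift_mk_X]
  fin_cases i <;> simp [ofMonoidAlgebra_single, M2.gen30, M2.gen03, M2.gen11, M2.liftFun]

noncomputable def relIdealEquiv :
    (MvPolynomial (Fin 3) ℤ ⧸ relIdeal) ≃ₐ[ℤ] AddMonoidAlgebra ℤ M2 :=
  AlgEquiv.ofAlgHom toMonoidAlgebra ofMonoidAlgebra toMonoidAlgebra_comp_ofMonoidAlgebra
    ofMonoidAlgebra_comp_toMonoidAlgebra

/-- The multiplicative invariant algebra `ℤ[A₂]^{S₃} ≅ ℤ[M₂]` is presented as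
`ℤ[x,y,z]/(z³ - xy)`. Concretely: the Hilbert basis (set of indecomposable nonzero elements)
of `M₂ = {(l₁,l₂) ∈ ℤ₊² | l₁ + 2l₂ ≡ 0 mod 3}` is `{(1,1), (3,0), (0,3)}`, and there is a
`ℤ`-algebra isomorphism `ℤ[x,y,z]/(z³-xy) ≅ ℤ[M₂]` with `x ↦ (3,0)`, `y ↦ (0,3)`,
`z ↦ (1,1)`. -/
theorem A2_S3_invariant_algebra :
    ({m : ℕ × ℕ | m ∈ M2 ∧ m ≠ 0 ∧
        ∀ a b : ℕ × ℕ, a ∈ M2 → b ∈ M2 → a + b = m → a = 0 ∨ b = 0} =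
      {(1, 1), (3, 0), (0, 3)}) ∧
    ∃ e : (MvPolynomial (Fin 3) ℤ ⧸ relIdeal) ≃ₐ[ℤ] AddMonoidAlgebra ℤ M2,
      e (Ideal.Quotient.mk relIdeal (X 0)) =
        AddMonoidAlgebra.single ⟨(3, 0), by show 3 ∣ _; omega⟩ 1 ∧
      e (Ideal.Quotient.mk relIdeal (X 1)) =
        AddMonoidAlgebra.single ⟨(0, 3), by show 3 ∣ _; omega⟩ 1 ∧
      e (Ideal.Quotient.mk relIdeal (X 2)) =
        AddMonoidAlgebra.single ⟨(1, 1), by show 3 ∣ _; omega⟩ 1 := by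
  refine ⟨M2.indecomposables_eq, relIdealEquiv, ?_, ?_, ?_⟩ <;>
    exact relIdealLift_mk_X M2.single_gen11_pow_three _
end

section
/- For $n \ge 3$, the monoid $M_n = \{(l_1,\dots,l_n) \in \mathbb{Z}_+^n \mid \sum_{i=1}^n i l_i \equiv 0 \pmod 2\}$ is isomorphic to $\mathbb{Z}_+^{\lfloor n/2 \rfloor} \oplus V$, where $V = \{(k_1,\dots,k_{\lceil n/2\rceil}) \in \mathbb{Z}_+^{\lceil n/2 \rceil} \mid \sum_i k_i \equiv 0 \pmod 2\}$; consequently its monoid algebra over $\mathbb{Z}$ is a polynomial ring in $\lfloor n/2 \rfloor$ variables over the second Veronese subring of a polynomial ring in $\lceil n/2 \rceil$ variables over $\mathbb{Z}$. -/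
open MvPolynomial

/-- The second Veronese subalgebra of `k[t₁,…,t_d]`: the span of the homogeneous polynomials
of even degree, i.e. the polynomials all of whose monomials have even total degree. -/
def evenVeronese (k : Type) [CommRing k] (d : ℕ) : Subalgebra k (MvPolynomial (Fin d) k) where
  carrier := {p | ∀ m ∈ p.support, Even (m.sum fun _ e => e)}
  add_mem' := by
    intro p q hp hq m hm
    rcases Finset.mem_union.1 (Finsupp.support_add hm) with h | h
    · exact hp m h
    · exact hq m h
  mul_mem' := by
    classical
    intro p q hp hq m hm
    obtain ⟨a, ha, b, hb, rfl⟩ := Finset.mem_add.1 (MvPolynomial.support_mul _ _ hm)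
    have h : (a + b).sum (fun _ e => e) = a.sum (fun _ e => e) + b.sum (fun _ e => e) :=
      Finsupp.sum_add_index' (fun _ => rfl) (fun _ _ _ => rfl)
    rw [h]
    exact (hp a ha).add (hq b hb)
  algebraMap_mem' := by
    intro r m hm
    have h : m ∈ ((monomial 0) r : MvPolynomial (Fin d) k).support := by
      rw [← MvPolynomial.C_apply]
      simpa [MvPolynomial.algebraMap_eq] using hm
    have h2 := MvPolynomial.support_monomial_subset h
    simp only [Finset.mem_singleton] at h2
    subst h2
    simp

/-- The monoid `Mₙ = {(l₁,…,lₙ) ∈ ℤ₊ⁿ | ∑ i·lᵢ ≡ 0 (mod 2)}` (the `Fin n`-index `i`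
corresponds to the classical index `i+1`). -/
def MC (n : ℕ) : AddSubmonoid (Fin n → ℕ) where
  carrier := {l | 2 ∣ ∑ i, (i.1 + 1) * l i}
  zero_mem' := by simp
  add_mem' := by
    intro a b ha hb
    have h : (∑ i, (i.1 + 1) * (a + b) i) = (∑ i, (i.1 + 1) * a i) + ∑ i, (i.1 + 1) * b i := by
      simp [Pi.add_apply, mul_add, Finset.sum_add_distrib]
    show 2 ∣ ∑ i, (i.1 + 1) * (a + b) i
    rw [h]
    exact Nat.dvd_add ha hb

/-- The monoid `V = {(k₁,…,k_m) ∈ ℤ₊^m | ∑ kᵢ ≡ 0 (mod 2)}`. -/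
def VC (m : ℕ) : AddSubmonoid (Fin m → ℕ) where
  carrier := {l | 2 ∣ ∑ i, l i}
  zero_mem' := by simp
  add_mem' := by
    intro a b ha hb
    have h : (∑ i, (a + b) i) = (∑ i, a i) + ∑ i, b i := by
      simp [Pi.add_apply, Finset.sum_add_distrib]
    show 2 ∣ ∑ i, (a + b) i
    rw [h]
    exact Nat.dvd_add ha hb

/-!
In classical indices, `∑ i lᵢ ≡ ∑_{i odd} lᵢ (mod 2)`, so the defining congruence of `Mₙ` only
constrains the `⌈n/2⌉` odd-indexed coordinates, which form a copy of `V`, while the `⌊n/2⌋`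
even-indexed coordinates are free. The monoid algebra of a product `ℤ₊^k × V` is the monoid
algebra of `ℤ₊^k` over `ℤ[V]`, i.e. a polynomial ring over `ℤ[V]`. Finally the image of `V ↪ ℤ₊^m`
is the set of exponents of even total degree, so `ℤ[V]` maps isomorphically onto the span of the
even-degree monomials.
-/

-- Parity of the 0-based `Fin n` index, opposite to the parity of the classical index.
def finOddSumEvenEquiv (n : ℕ) : Fin (n / 2) ⊕ Fin ((n + 1) / 2) ≃ Fin n where
  toFun := Sum.elim (fun j => ⟨2 * j + 1, by omega⟩) (fun j => ⟨2 * j, by omega⟩)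
  invFun i := if h : i.1 % 2 = 1 then .inl ⟨i / 2, by omega⟩ else .inr ⟨i / 2, by omega⟩
  left_inv := by
    rintro (j | j)
    · simp only [Sum.elim_inl, Nat.mul_add_mod_self_left, Nat.mod_succ, ↓reduceDIte, Sum.inl.injEq,
        Fin.ext_iff]
      omega
    · simp
  right_inv i := by
    ext
    by_cases h : i.1 % 2 = 1 <;> simp only [h, ↓reduceDIte, Sum.elim_inl, Sum.elim_inr] <;> omega

def oddEvenSplit (M : Type*) [AddCommMonoid M] (n : ℕ) :
    (Fin n → M) ≃+ (Fin (n / 2) → M) × (Fin ((n + 1) / 2) → M) :=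
  (AddEquiv.arrowCongr (finOddSumEvenEquiv n).symm (AddEquiv.refl M)).trans
    (LinearEquiv.sumArrowLequivProdArrow _ _ ℕ M).toAddEquiv

lemma mem_MC_iff (n : ℕ) (l : Fin n → ℕ) :
    l ∈ MC n ↔ (oddEvenSplit ℕ n l).2 ∈ VC ((n + 1) / 2) := by
  have hsplit : ∑ i, (i.1 + 1) * l i =
      2 * (∑ j : Fin (n / 2), (j.1 + 1) * l ⟨2 * j + 1, by omega⟩ +
        ∑ j : Fin ((n + 1) / 2), j.1 * l ⟨2 * j, by omega⟩) +
      ∑ j : Fin ((n + 1) / 2), l ⟨2 * j, by omega⟩ := by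
    rw [← (finOddSumEvenEquiv n).sum_comp, Fintype.sum_sum_type]
    simp only [finOddSumEvenEquiv, Equiv.coe_fn_mk, Sum.elim_inl, Sum.elim_inr]
    rw [mul_add, Finset.mul_sum, Finset.mul_sum, add_assoc, ← Finset.sum_add_distrib]
    congr 1 <;> exact Finset.sum_congr rfl fun j _ => by ring
  change 2 ∣ _ ↔ 2 ∣ _
  rw [hsplit, Nat.dvd_add_right (dvd_mul_right 2 _)]
  rfl

lemma map_MC_oddEvenSplit (n : ℕ) :
    (MC n).map (oddEvenSplit ℕ n).toAddMonoidHom =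
      (⊤ : AddSubmonoid (Fin (n / 2) → ℕ)).prod (VC ((n + 1) / 2)) := by
  ext p
  rw [AddSubmonoid.mem_map_equiv, mem_MC_iff, AddEquiv.apply_symm_apply]
  simp [AddSubmonoid.mem_prod]

def MC.equivProdVC (n : ℕ) : MC n ≃+ (Fin (n / 2) → ℕ) × VC ((n + 1) / 2) :=
  ((oddEvenSplit ℕ n).addSubmonoidMap (MC n)).trans <|
    (AddEquiv.addSubmonoidCongr (map_MC_oddEvenSplit n)).trans <|
      (AddSubmonoid.prodEquiv _ _).trans (AddSubmonoid.topEquiv.prodCongr (AddEquiv.refl _))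

namespace AddMonoidAlgebra

variable (R : Type*) [CommSemiring R]

noncomputable def algEquivMvPolynomialOfAddEquivProd {σ M N : Type*} [Finite σ]
    [AddCommMonoid M] [AddCommMonoid N] (e : M ≃+ (σ → ℕ) × N) :
    AddMonoidAlgebra R M ≃ₐ[R] MvPolynomial σ (AddMonoidAlgebra R N) :=
  (domCongr R R (e.trans (Finsupp.addEquivFunOnFinite.symm.prodCongr (AddEquiv.refl N)))).trans
    (curryAlgEquiv R)

theorem mem_range_mapDomainAlgHom_iff {A M N : Type*} [Semiring A] [Algebra R A]
    [AddMonoid M] [AddMonoid N] {f : N →+ M} (hf : Function.Injective f)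
    (x : AddMonoidAlgebra A M) :
    x ∈ (mapDomainAlgHom R A f).range ↔ ∀ m ∈ x.coeff.support, m ∈ Set.range f := by
  have hcoeff : x ∈ (mapDomainAlgHom R A f).range ↔
      x.coeff ∈ Set.range (Finsupp.mapDomain f) := by
    constructor
    · rintro ⟨y, rfl⟩
      exact ⟨y.coeff, by simp [coeff_mapDomain]⟩
    · rintro ⟨y, hy⟩
      exact ⟨ofCoeff y, coeff_injective (by simp [coeff_mapDomain, hy])⟩
  refine hcoeff.trans ((Finsupp.mem_range_mapDomain_iff f hf x.coeff).trans ?_)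
  simp only [Finsupp.mem_support_iff, not_imp_comm]

end AddMonoidAlgebra

namespace VC

noncomputable def toFinsupp (m : ℕ) : VC m →+ (Fin m →₀ ℕ) :=
  Finsupp.addEquivFunOnFinite.symm.toAddMonoidHom.comp (VC m).subtype

lemma toFinsupp_injective (m : ℕ) : Function.Injective (toFinsupp m) :=
  Finsupp.addEquivFunOnFinite.symm.injective.comp Subtype.val_injective

lemma range_toFinsupp (m : ℕ) : Set.range (toFinsupp m) = {d | Even d.degree} := by
  ext d
  simp only [Set.mem_range, Set.mem_ofPred_eq, Finsupp.degree_eq_sum, even_iff_two_dvd]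
  constructor
  · rintro ⟨v, rfl⟩
    exact v.2
  · intro hd
    exact ⟨⟨d, hd⟩, Finsupp.equivFunOnFinite_symm_coe d⟩

lemma evenVeronese_eq_range_mapDomainAlgHom (k : Type) [CommRing k] (m : ℕ) :
    evenVeronese k m = (AddMonoidAlgebra.mapDomainAlgHom k k (toFinsupp m)).range := by
  ext p
  rw [AddMonoidAlgebra.mem_range_mapDomainAlgHom_iff k (toFinsupp_injective m), range_toFinsupp]
  rfl

noncomputable def algEquivEvenVeronese (k : Type) [CommRing k] (m : ℕ) :
    AddMonoidAlgebra k (VC m) ≃ₐ[k] evenVeronese k m :=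
  (AlgEquiv.ofInjective _ (AddMonoidAlgebra.mapDomain_injective (toFinsupp_injective m))).trans
    (Subalgebra.equivOfEq _ _ (evenVeronese_eq_range_mapDomainAlgHom k m).symm)

end VC

theorem Cn_invariant_structure_general (n : ℕ) :
    Nonempty ((MC n) ≃+ ((Fin (n / 2) → ℕ) × (VC ((n + 1) / 2)))) ∧
    Nonempty (AddMonoidAlgebra ℤ (MC n) ≃ₐ[ℤ]
      MvPolynomial (Fin (n / 2)) (AddMonoidAlgebra ℤ (VC ((n + 1) / 2)))) ∧
    Nonempty (AddMonoidAlgebra ℤ (VC ((n + 1) / 2)) ≃ₐ[ℤ]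
      (evenVeronese ℤ ((n + 1) / 2))) :=
  ⟨⟨MC.equivProdVC n⟩,
    ⟨AddMonoidAlgebra.algEquivMvPolynomialOfAddEquivProd ℤ (MC.equivProdVC n)⟩,
    ⟨VC.algEquivEvenVeronese ℤ ((n + 1) / 2)⟩⟩

/-- For `n ≥ 3`, the monoid `Mₙ = {l ∈ ℤ₊ⁿ | ∑ i·lᵢ even}` of type `Cₙ` decomposes as
`ℤ₊^{⌊n/2⌋} ⊕ V` with `V = {k ∈ ℤ₊^{⌈n/2⌉} | ∑ kᵢ even}`; consequently its monoid algebra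
`ℤ[Mₙ]` is a polynomial ring in `⌊n/2⌋` variables over `ℤ[V]`, and `ℤ[V]` is the second
Veronese subring of a polynomial ring in `⌈n/2⌉` variables over `ℤ`. -/
theorem Cn_invariant_structure (n : ℕ) (hn : 3 ≤ n) :
    Nonempty ((MC n) ≃+ ((Fin (n / 2) → ℕ) × (VC ((n + 1) / 2)))) ∧
    Nonempty (AddMonoidAlgebra ℤ (MC n) ≃ₐ[ℤ]
      MvPolynomial (Fin (n / 2)) (AddMonoidAlgebra ℤ (VC ((n + 1) / 2)))) ∧
    Nonempty (AddMonoidAlgebra ℤ (VC ((n + 1) / 2)) ≃ₐ[ℤ]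
      (evenVeronese ℤ ((n + 1) / 2))) :=
  Cn_invariant_structure_general n
end

section
/- The Hilbert basis of the monoid $M_n = \{(l_1,\dots,l_n) \in \mathbb{Z}_+^n \mid \sum_{i \text{ odd}} l_i \equiv 0 \pmod 2\}$ consists of: the standard basis vectors $e_i$ for even $i$, the doubled standard basis vectors $2e_i$ for odd $i$, and the sums $e_i + e_j$ for $1 \le i < j \le n$ with $i, j$ both odd. In particular $M_n$ has exactly $n + \binom{\lceil n/2\rceil}{2}$ indecomposable elements. -/
/-- The defining condition of the monoid `Mₙ ⊆ ℤ₊ⁿ` for type `Cₙ`: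
the sum of the coordinates `lᵢ` with odd index `i` (indices running through `1,…,n`,
so the `Fin n`-index `i` corresponds to `i+1`) is even. -/
def inMC (n : ℕ) (l : Fin n → ℕ) : Prop :=
  2 ∣ ∑ i : Fin n, if Odd (i.1 + 1) then l i else 0

/-- The set of indecomposable nonzero elements (the Hilbert basis) of `Mₙ`. -/
def hilbMC (n : ℕ) : Set (Fin n → ℕ) :=
  {l | inMC n l ∧ l ≠ 0 ∧
    ∀ a b : Fin n → ℕ, inMC n a → inMC n b → a + b = l → a = 0 ∨ b = 0}

open Finset

def S (n : ℕ) (l : Fin n → ℕ) : ℕ := ∑ i : Fin n, if Odd (i.1 + 1) then l i else 0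

lemma inMC_iff (n : ℕ) (l : Fin n → ℕ) : inMC n l ↔ 2 ∣ S n l := Iff.rfl

lemma S_add (n : ℕ) (a b : Fin n → ℕ) : S n (a+b) = S n a + S n b := by
  unfold S
  rw [← Finset.sum_add_distrib]
  exact Finset.sum_congr rfl fun i _ => by by_cases h : Odd (i.1+1) <;> simp [h]

lemma S_single (n : ℕ) (i : Fin n) (c : ℕ) :
    S n (Pi.single i c) = if Odd (i.1+1) then c else 0 := by
  unfold S
  rw [Finset.sum_eq_single i]
  · simp
  · intro j _ hj; simp [Pi.single_apply, hj]
  · simp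

lemma S_support (n : ℕ) (a : Fin n → ℕ) (s : Finset (Fin n)) (h : ∀ x ∉ s, a x = 0) :
    S n a = ∑ x ∈ s, if Odd (x.1+1) then a x else 0 := by
  unfold S
  rw [← Finset.sum_subset (Finset.subset_univ s)]
  intro x _ hx
  simp [h x hx]

lemma add_pt {n : ℕ} {a b l : Fin n → ℕ} (hab : a + b = l) (x : Fin n) :
    a x + b x = l x := by rw [← hab]; rfl

lemma eq_zero_iff {n : ℕ} (a : Fin n → ℕ) : a = 0 ↔ ∀ x, a x = 0 := by
  constructor
  · intro h x; rw [h]; rfl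
  · intro h; funext x; exact h x

-- Case 1: even index, single i 1
lemma mem1 {n : ℕ} (i : Fin n) (hi : Even (i.1 + 1)) :
    (Pi.single i 1 : Fin n → ℕ) ∈ hilbMC n := by
  have hodd : ¬ Odd (i.1 + 1) := by simp [Nat.not_odd_iff_even, hi]
  refine ⟨?_, ?_, ?_⟩
  · rw [inMC_iff, S_single, if_neg hodd]; exact dvd_zero 2
  · intro h
    have := congrFun h i
    simp at this
  · intro a b _ _ hab
    have key : ∀ x, a x + b x = if x = i then 1 else 0 := by
      intro x; rw [add_pt hab x, Pi.single_apply]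
    rcases Nat.eq_zero_or_pos (a i) with h0 | h0
    · left; rw [eq_zero_iff]; intro x
      have := key x
      rcases eq_or_ne x i with rfl | hx
      · exact h0
      · rw [if_neg hx] at this; omega
    · right; rw [eq_zero_iff]; intro x
      have := key x
      rcases eq_or_ne x i with rfl | hx
      · rw [if_pos rfl] at this; omega
      · rw [if_neg hx] at this; omega

-- Case 2: odd index, single i 2
lemma mem2 {n : ℕ} (i : Fin n) (hi : Odd (i.1 + 1)) :
    (Pi.single i 2 : Fin n → ℕ) ∈ hilbMC n := by
  refine ⟨?_, ?_, ?_⟩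
  · rw [inMC_iff, S_single, if_pos hi]
  · intro h
    have := congrFun h i
    simp at this
  · intro a b ha hb hab
    have key : ∀ x, a x + b x = if x = i then 2 else 0 := by
      intro x; rw [add_pt hab x, Pi.single_apply]
    have hz : ∀ x, x ≠ i → a x = 0 ∧ b x = 0 := by
      intro x hx; have := key x; rw [if_neg hx] at this; omega
    have hSa : S n a = a i := by
      rw [S_support n a {i} (fun x hx => (hz x (by simpa using hx)).1),
        Finset.sum_singleton, if_pos hi]
    rw [inMC_iff, hSa] at ha
    have hi2 : a i + b i = 2 := by have := key i; rwa [if_pos rfl] at this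
    rcases Nat.eq_zero_or_pos (a i) with h0 | h0
    · left; rw [eq_zero_iff]; intro x
      rcases eq_or_ne x i with rfl | hx
      · exact h0
      · exact (hz x hx).1
    · right; rw [eq_zero_iff]; intro x
      rcases eq_or_ne x i with rfl | hx
      · omega
      · exact (hz x hx).2

-- Case 3: i < j both odd
lemma mem3 {n : ℕ} (i j : Fin n) (hij : i ≠ j) (hi : Odd (i.1 + 1)) (hj : Odd (j.1 + 1)) :
    (Pi.single i 1 + Pi.single j 1 : Fin n → ℕ) ∈ hilbMC n := by
  refine ⟨?_, ?_, ?_⟩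
  · rw [inMC_iff, S_add, S_single, S_single, if_pos hi, if_pos hj]
  · intro h
    have := congrFun h i
    simp [Pi.single_apply, hij] at this
  · intro a b ha hb hab
    have key : ∀ x, a x + b x = (if x = i then 1 else 0) + (if x = j then 1 else 0) := by
      intro x; rw [add_pt hab x]; simp [Pi.single_apply]
    have hz : ∀ x, x ≠ i → x ≠ j → a x = 0 ∧ b x = 0 := by
      intro x hx hx'; have := key x; rw [if_neg hx, if_neg hx'] at this; omega
    have hSa : S n a = a i + a j := by
      rw [S_support n a {i, j} (fun x hx => by
        simp at hx; exact (hz x hx.1 hx.2).1)]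
      rw [Finset.sum_pair hij, if_pos hi, if_pos hj]
    have hai : a i + b i = 1 := by have := key i; simpa [hij] using this
    have haj : a j + b j = 1 := by have := key j; simpa [hij.symm] using this
    rw [inMC_iff, hSa] at ha
    rcases Nat.eq_zero_or_pos (a i) with h0 | h0
    · left; rw [eq_zero_iff]; intro x
      rcases eq_or_ne x i with rfl | hx
      · exact h0
      rcases eq_or_ne x j with rfl | hx'
      · omega
      · exact (hz x hx hx').1
    · right; rw [eq_zero_iff]; intro x
      rcases eq_or_ne x i with rfl | hx
      · omega
      rcases eq_or_ne x j with rfl | hx'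
      · omega
      · exact (hz x hx hx').2

lemma hilb_sub {n : ℕ} {l : Fin n → ℕ} (hl : l ∈ hilbMC n) :
    (∃ i : Fin n, Even (i.1 + 1) ∧ l = Pi.single i 1) ∨
    (∃ i : Fin n, Odd (i.1 + 1) ∧ l = Pi.single i 2) ∨
    (∃ i j : Fin n, i < j ∧ Odd (i.1 + 1) ∧ Odd (j.1 + 1) ∧
      l = Pi.single i 1 + Pi.single j 1) := by
  obtain ⟨hmem, hne, hind⟩ := hl
  rw [inMC_iff] at hmem
  by_cases h1 : ∃ k, Even (k.1 + 1) ∧ l k ≠ 0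
  · obtain ⟨k, hk, hlk⟩ := h1
    have hodd : ¬ Odd (k.1 + 1) := by simp [Nat.not_odd_iff_even, hk]
    set a : Fin n → ℕ := Pi.single k 1 with ha
    set b : Fin n → ℕ := l - a with hb
    have hab : a + b = l := by
      funext x
      show a x + (l x - a x) = l x
      rcases eq_or_ne x k with rfl | hx
      · simp [ha]; omega
      · simp [ha, Pi.single_apply, hx]
    have hSa : S n a = 0 := by rw [ha, S_single, if_neg hodd]
    have hS : S n a + S n b = S n l := by rw [← S_add, hab]
    have hia : inMC n a := by rw [inMC_iff, hSa]; exact dvd_zero 2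
    have hib : inMC n b := by rw [inMC_iff]; omega
    rcases hind a b hia hib hab with h | h
    · exfalso; have := congrFun h k; simp [ha] at this
    · left
      refine ⟨k, hk, ?_⟩
      rw [← hab, h, add_zero]
  · push_neg at h1
    by_cases h2 : ∃ k, 2 ≤ l k
    · obtain ⟨k, hk2⟩ := h2
      have hodd : Odd (k.1 + 1) := by
        rcases Nat.even_or_odd (k.1 + 1) with he | ho
        · have := h1 k he; omega
        · exact ho
      set a : Fin n → ℕ := Pi.single k 2 with ha
      set b : Fin n → ℕ := l - a with hb
      have hab : a + b = l := by
        funext x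
        show a x + (l x - a x) = l x
        rcases eq_or_ne x k with rfl | hx
        · simp [ha]; omega
        · simp [ha, Pi.single_apply, hx]
      have hSa : S n a = 2 := by rw [ha, S_single, if_pos hodd]
      have hS : S n a + S n b = S n l := by rw [← S_add, hab]
      have hia : inMC n a := by rw [inMC_iff, hSa]
      have hib : inMC n b := by rw [inMC_iff]; omega
      rcases hind a b hia hib hab with h | h
      · exfalso; have := congrFun h k; simp [ha] at this
      · right; left
        refine ⟨k, hodd, ?_⟩
        rw [← hab, h, add_zero]
    · push_neg at h2
      -- all coords ≤ 1, even-indexed coords 0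
      obtain ⟨i, hi⟩ : ∃ i, l i ≠ 0 := by
        by_contra h
        push_neg at h
        exact hne (funext fun x => h x)
      have hli : l i = 1 := by have := h2 i; omega
      have hiodd : Odd (i.1 + 1) := by
        rcases Nat.even_or_odd (i.1 + 1) with he | ho
        · exact absurd (h1 i he) hi
        · exact ho
      -- find a second index j ≠ i with l j = 1 and odd
      have hsplit : S n l = (if Odd (i.1+1) then l i else 0)
          + ∑ x ∈ Finset.univ.erase i, (if Odd (x.1+1) then l x else 0) := by
        rw [S]
        exact (Finset.add_sum_erase _ _ (Finset.mem_univ i)).symm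
      rw [if_pos hiodd, hli] at hsplit
      have hj : ∃ j ∈ Finset.univ.erase i, (if Odd (j.1+1) then l j else 0) ≠ 0 := by
        by_contra h
        push_neg at h
        rw [Finset.sum_eq_zero h] at hsplit
        omega
      obtain ⟨j, hjmem, hjne⟩ := hj
      have hji : j ≠ i := (Finset.mem_erase.mp hjmem).1
      have hjodd : Odd (j.1 + 1) := by by_contra h; rw [if_neg h] at hjne; exact hjne rfl
      have hlj : l j = 1 := by rw [if_pos hjodd] at hjne; have := h2 j; omega
      set a : Fin n → ℕ := Pi.single i 1 + Pi.single j 1 with ha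
      set b : Fin n → ℕ := l - a with hb
      have hab : a + b = l := by
        funext x
        show a x + (l x - a x) = l x
        rcases eq_or_ne x i with rfl | hxi
        · simp [ha, Pi.single_apply, hji.symm, hli]
        rcases eq_or_ne x j with rfl | hxj
        · simp [ha, Pi.single_apply, hji, hlj]
        · simp [ha, Pi.single_apply, hxi, hxj]
      have hSa : S n a = 2 := by
        rw [ha, S_add, S_single, S_single, if_pos hiodd, if_pos hjodd]
      have hS : S n a + S n b = S n l := by rw [← S_add, hab]
      have hia : inMC n a := by rw [inMC_iff, hSa]
      have hib : inMC n b := by rw [inMC_iff]; omega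
      rcases hind a b hia hib hab with h | h
      · exfalso; have := congrFun h i; simp [ha, Pi.single_apply, hji.symm] at this
      · right; right
        have hleq : l = a := by rw [← hab, h, add_zero]
        rcases lt_trichotomy i j with hlt | heq | hgt
        · exact ⟨i, j, hlt, hiodd, hjodd, hleq⟩
        · exact absurd heq.symm hji
        · exact ⟨j, i, hgt, hjodd, hiodd, by rw [hleq, ha, add_comm]⟩

lemma card_parity_filter (n : ℕ) :
    (Finset.univ.filter fun i : Fin n => Odd (i.1+1)).card = (n+1)/2 ∧
    (Finset.univ.filter fun i : Fin n => Even (i.1+1)).card = n/2 := by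
  constructor
  all_goals rw [Finset.card_filter]
  · rw [Fin.sum_univ_eq_sum_range (fun i => if Odd (i+1) then (1:ℕ) else 0) n]
    induction n with
    | zero => simp
    | succ m ih =>
      rw [Finset.sum_range_succ, ih]
      rcases Nat.even_or_odd (m+1) with h | h
      · rw [if_neg (Nat.not_odd_iff_even.mpr h)]
        have h2 := Nat.even_iff.mp h; omega
      · rw [if_pos h]
        have h2 := Nat.odd_iff.mp h; omega
  · rw [Fin.sum_univ_eq_sum_range (fun i => if Even (i+1) then (1:ℕ) else 0) n]
    induction n with
    | zero => simp
    | succ m ih =>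
      rw [Finset.sum_range_succ, ih]
      rcases Nat.even_or_odd (m+1) with h | h
      · rw [if_pos h]
        have h2 := Nat.even_iff.mp h; omega
      · rw [if_neg (Nat.not_even_iff_odd.mpr h)]
        have h2 := Nat.odd_iff.mp h; omega

lemma card_pairs {α : Type*} [DecidableEq α] [LinearOrder α] (O : Finset α) :
    ((O ×ˢ O).filter fun p => p.1 < p.2).card = O.card.choose 2 := by
  rw [← Finset.card_powersetCard 2 O]
  apply Finset.card_bij (fun p _ => ({p.1, p.2} : Finset α))
  · intro p hp
    rw [Finset.mem_filter, Finset.mem_product] at hp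
    rw [Finset.mem_powersetCard]
    refine ⟨?_, ?_⟩
    · intro x hx
      rcases Finset.mem_insert.mp hx with rfl | hx
      · exact hp.1.1
      · rw [Finset.mem_singleton] at hx; subst hx; exact hp.1.2
    · rw [Finset.card_insert_of_notMem (by simp [ne_of_lt hp.2]), Finset.card_singleton]
  · intro p hp q hq h
    rw [Finset.mem_filter] at hp hq
    have hp2 := hp.2
    have hq2 := hq.2
    have h1 : p.1 = q.1 ∨ p.1 = q.2 := by
      have : p.1 ∈ ({q.1, q.2} : Finset α) := h ▸ (by simp)
      simpa using this
    have h2 : p.2 = q.1 ∨ p.2 = q.2 := by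
      have : p.2 ∈ ({q.1, q.2} : Finset α) := h ▸ (by simp)
      simpa using this
    have h3 : q.1 = p.1 ∨ q.1 = p.2 := by
      have : q.1 ∈ ({p.1, p.2} : Finset α) := h ▸ (by simp)
      simpa using this
    rcases h1 with e1 | e1
    · rcases h2 with e2 | e2
      · exact absurd (e1 ▸ e2 ▸ hp2) (lt_irrefl _)
      · exact Prod.ext e1 e2
    · rcases h3 with e3 | e3
      · exact absurd (e3.trans e1) (ne_of_lt hq2)
      · exact absurd (lt_trans (lt_of_lt_of_eq hq2 e1.symm)
          (lt_of_lt_of_eq hp2 e3.symm)) (lt_irrefl _)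
  · intro s hs
    rw [Finset.mem_powersetCard] at hs
    obtain ⟨a, b, hab, rfl⟩ := Finset.card_eq_two.mp hs.2
    have ha : a ∈ O := hs.1 (by simp)
    have hb : b ∈ O := hs.1 (by simp)
    rcases lt_or_gt_of_ne hab with h | h
    · exact ⟨(a, b), by rw [Finset.mem_filter, Finset.mem_product]; exact ⟨⟨ha, hb⟩, h⟩, rfl⟩
    · exact ⟨(b, a), by rw [Finset.mem_filter, Finset.mem_product]; exact ⟨⟨hb, ha⟩, h⟩,
        by simp [Finset.pair_comm]⟩


lemma single_inj {n : ℕ} {c : ℕ} (hc : c ≠ 0) :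
    Function.Injective (fun i : Fin n => (Pi.single i c : Fin n → ℕ)) := by
  intro i j h
  by_contra hne
  have h1 : (Pi.single i c : Fin n → ℕ) i = (Pi.single j c : Fin n → ℕ) i := congrFun h i
  rw [Pi.single_eq_same, Pi.single_apply, if_neg hne] at h1
  exact hc h1

/-- The Hilbert basis of `Mₙ = {l ∈ ℤ₊ⁿ | ∑_{i odd} lᵢ ≡ 0 mod 2}` consists of the standard
basis vectors `eᵢ` for even `i`, the doubled standard basis vectors `2eᵢ` for odd `i`, and the
sums `eᵢ + eⱼ` for `i < j` both odd; in particular there are exactly `n + (⌈n/2⌉ choose 2)`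
indecomposable elements. -/
theorem hilbert_basis_Cn (n : ℕ) :
    (hilbMC n =
      {l | ∃ i : Fin n, Even (i.1 + 1) ∧ l = Pi.single i 1} ∪
      {l | ∃ i : Fin n, Odd (i.1 + 1) ∧ l = Pi.single i 2} ∪
      {l | ∃ i j : Fin n, i < j ∧ Odd (i.1 + 1) ∧ Odd (j.1 + 1) ∧
          l = Pi.single i 1 + Pi.single j 1}) ∧
    (hilbMC n).ncard = n + Nat.choose ((n + 1) / 2) 2 := by
  set A : Set (Fin n → ℕ) := {l | ∃ i : Fin n, Even (i.1 + 1) ∧ l = Pi.single i 1} with hA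
  set B : Set (Fin n → ℕ) := {l | ∃ i : Fin n, Odd (i.1 + 1) ∧ l = Pi.single i 2} with hB
  set C : Set (Fin n → ℕ) := {l | ∃ i j : Fin n, i < j ∧ Odd (i.1 + 1) ∧ Odd (j.1 + 1) ∧
      l = Pi.single i 1 + Pi.single j 1} with hC
  have heq : hilbMC n = A ∪ B ∪ C := by
    ext l
    constructor
    · intro hl
      rcases hilb_sub hl with h | h | h
      · exact Or.inl (Or.inl h)
      · exact Or.inl (Or.inr h)
      · exact Or.inr h
    · rintro ((⟨i, hi, rfl⟩ | ⟨i, hi, rfl⟩) | ⟨i, j, hij, hi, hj, rfl⟩)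
      · exact mem1 i hi
      · exact mem2 i hi
      · exact mem3 i j (ne_of_lt hij) hi hj
  refine ⟨heq, ?_⟩
  rw [heq]
  -- images
  have hAim : A = (fun i => (Pi.single i 1 : Fin n → ℕ)) '' {i : Fin n | Even (i.1 + 1)} := by
    ext l
    simp only [hA, Set.mem_image, Set.mem_setOf_eq]
    constructor
    · rintro ⟨i, hi, rfl⟩; exact ⟨i, hi, rfl⟩
    · rintro ⟨i, hi, rfl⟩; exact ⟨i, hi, rfl⟩
  have hBim : B = (fun i => (Pi.single i 2 : Fin n → ℕ)) '' {i : Fin n | Odd (i.1 + 1)} := by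
    ext l
    simp only [hB, Set.mem_image, Set.mem_setOf_eq]
    constructor
    · rintro ⟨i, hi, rfl⟩; exact ⟨i, hi, rfl⟩
    · rintro ⟨i, hi, rfl⟩; exact ⟨i, hi, rfl⟩
  set O : Finset (Fin n) := Finset.univ.filter (fun i => Odd (i.1 + 1)) with hO
  set F : Finset (Fin n × Fin n) := (O ×ˢ O).filter (fun p => p.1 < p.2) with hF
  set g : Fin n × Fin n → (Fin n → ℕ) := fun p => Pi.single p.1 1 + Pi.single p.2 1 with hg
  have hFmem : ∀ p : Fin n × Fin n, p ∈ F ↔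
      p.1 < p.2 ∧ Odd (p.1.1 + 1) ∧ Odd (p.2.1 + 1) := by
    intro p
    rw [hF, Finset.mem_filter, Finset.mem_product, hO, Finset.mem_filter, Finset.mem_filter]
    simp only [Finset.mem_univ, true_and]
    tauto
  have hCim : C = g '' ↑F := by
    ext l
    simp only [hC, Set.mem_image, Finset.mem_coe, Set.mem_setOf_eq]
    constructor
    · rintro ⟨i, j, hij, hi, hj, rfl⟩
      exact ⟨(i, j), (hFmem (i, j)).mpr ⟨hij, hi, hj⟩, rfl⟩
    · rintro ⟨p, hp, rfl⟩
      obtain ⟨h1, h2, h3⟩ := (hFmem p).mp hp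
      exact ⟨p.1, p.2, h1, h2, h3, rfl⟩
  -- injectivity of g on F
  have hgval : ∀ (p : Fin n × Fin n) (x : Fin n),
      g p x = (if x = p.1 then 1 else 0) + (if x = p.2 then 1 else 0) := by
    intro p x
    rw [hg]
    simp [Pi.single_apply]
  have hginj : Set.InjOn g ↑F := by
    intro p hp q hq h
    obtain ⟨hp1, _, _⟩ := (hFmem p).mp hp
    obtain ⟨hq1, _, _⟩ := (hFmem q).mp hq
    have e1 : q.1 = p.1 ∨ q.1 = p.2 := by
      by_contra hc
      push_neg at hc
      have := congrFun h q.1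
      rw [hgval, hgval, if_pos rfl, if_neg (ne_of_lt hq1), if_neg hc.1, if_neg hc.2] at this
      omega
    have e2 : p.1 = q.1 ∨ p.1 = q.2 := by
      by_contra hc
      push_neg at hc
      have := congrFun h p.1
      rw [hgval, hgval, if_pos rfl, if_neg (ne_of_lt hp1), if_neg hc.1, if_neg hc.2] at this
      omega
    have e3 : p.2 = q.1 ∨ p.2 = q.2 := by
      by_contra hc
      push_neg at hc
      have := congrFun h p.2
      rw [hgval, hgval, if_neg (ne_of_gt hp1), if_pos rfl, if_neg hc.1, if_neg hc.2] at this
      omega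
    rcases e2 with f1 | f1
    · rcases e3 with f2 | f2
      · exact absurd (f1 ▸ f2 ▸ hp1) (lt_irrefl _)
      · exact Prod.ext f1 f2
    · rcases e1 with f3 | f3
      · exact absurd (f3.trans f1) (ne_of_lt hq1)
      · exact absurd (lt_trans (lt_of_lt_of_eq hq1 f1.symm)
          (lt_of_lt_of_eq hp1 f3.symm)) (lt_irrefl _)
  -- cardinalities
  have hsetE : {i : Fin n | Even (i.1 + 1)} =
      ↑(Finset.univ.filter fun i : Fin n => Even (i.1 + 1)) := by ext i; simp
  have hsetO : {i : Fin n | Odd (i.1 + 1)} = ↑O := by ext i; simp [hO]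
  have hcardA : A.ncard = n / 2 := by
    rw [hAim, Set.ncard_image_of_injective _ (single_inj one_ne_zero), hsetE,
      Set.ncard_coe_finset, (card_parity_filter n).2]
  have hcardB : B.ncard = (n + 1) / 2 := by
    rw [hBim, Set.ncard_image_of_injective _ (single_inj two_ne_zero), hsetO,
      Set.ncard_coe_finset, (card_parity_filter n).1]
  have hcardC : C.ncard = Nat.choose ((n + 1) / 2) 2 := by
    rw [hCim, Set.ncard_image_of_injOn hginj, Set.ncard_coe_finset, hF, card_pairs,
      hO, (card_parity_filter n).1]
  -- finiteness
  have hfinA : A.Finite := by rw [hAim]; exact (Set.toFinite _).image _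
  have hfinB : B.Finite := by rw [hBim]; exact (Set.toFinite _).image _
  have hfinC : C.Finite := by rw [hCim]; exact (F.finite_toSet).image _
  -- disjointness
  have hAB : Disjoint A B := by
    rw [Set.disjoint_left]
    rintro l ⟨i, hi, rfl⟩ ⟨j, hj, hlj⟩
    have := congrFun hlj j
    rw [Pi.single_apply, Pi.single_eq_same] at this
    split at this <;> omega
  have hAC : Disjoint A C := by
    rw [Set.disjoint_left]
    rintro l ⟨i, hi, rfl⟩ ⟨a, b, hab, ha, hb, hlab⟩
    have h1 := congrFun hlab a
    have h2 := congrFun hlab b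
    rw [Pi.single_apply, Pi.add_apply, Pi.single_eq_same, Pi.single_apply,
      if_neg (ne_of_lt hab)] at h1
    rw [Pi.single_apply, Pi.add_apply, Pi.single_eq_same, Pi.single_apply,
      if_neg (ne_of_gt hab)] at h2
    have ha' : a = i := by by_contra hc; rw [if_neg hc] at h1; omega
    have hb' : b = i := by by_contra hc; rw [if_neg hc] at h2; omega
    exact absurd (ha'.trans hb'.symm) (ne_of_lt hab)
  have hBC : Disjoint B C := by
    rw [Set.disjoint_left]
    rintro l ⟨i, hi, rfl⟩ ⟨a, b, hab, ha, hb, hlab⟩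
    have h1 := congrFun hlab i
    rw [Pi.single_eq_same, Pi.add_apply, Pi.single_apply, Pi.single_apply] at h1
    rcases eq_or_ne i a with rfl | hia
    · rw [if_pos rfl, if_neg (ne_of_lt hab)] at h1; omega
    · rw [if_neg hia] at h1
      split at h1 <;> omega
  have hABC : Disjoint (A ∪ B) C := Set.disjoint_union_left.mpr ⟨hAC, hBC⟩
  rw [Set.ncard_union_eq hABC (hfinA.union hfinB) hfinC,
    Set.ncard_union_eq hAB hfinA hfinB, hcardA, hcardB, hcardC]
  omega
end

section
/- The Hilbert basis of the monoid $W = \{(k_1,k_2,k_3,k_4) \in \mathbb{Z}_+^4 \mid k_1 + 2k_2 + k_3 + 2k_4 \equiv 0 \pmod 3\}$ consists of exactly the twelve elements $(3,0,0,0)$, $(0,3,0,0)$, $(0,0,3,0)$, $(0,0,0,3)$, $(1,1,0,0)$, $(1,0,0,1)$, $(0,1,1,0)$, $(0,0,1,1)$, $(1,0,2,0)$, $(0,1,0,2)$, $(0,2,0,1)$, $(2,0,1,0)$. -/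
/-- The defining condition of the monoid `W ⊆ ℤ₊⁴`: `k₁ + 2k₂ + k₃ + 2k₄ ≡ 0 (mod 3)`. -/
def inW (k : Fin 4 → ℕ) : Prop := 3 ∣ (k 0 + 2 * k 1 + k 2 + 2 * k 3)

lemma not_indec {m : Fin 4 → ℕ} (g h : Fin 4 → ℕ) (hg : inW g) (hh : inW h)
    (hsum : g + h = m) (hg0 : g ≠ 0) (hh0 : h ≠ 0)
    (hind : ∀ a b : Fin 4 → ℕ, inW a → inW b → a + b = m → a = 0 ∨ b = 0) : False := by
  rcases hind g h hg hh hsum with e | e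
  exacts [hg0 e, hh0 e]

lemma small_case (k0 k1 k2 k3 : ℕ) (h0 : k0 ≤ 2) (h1 : k1 ≤ 2) (h2 : k2 ≤ 2) (h3 : k3 ≤ 2)
    (hm : inW ![k0,k1,k2,k3]) (hne : ![k0,k1,k2,k3] ≠ (0 : Fin 4 → ℕ))
    (hind : ∀ a b : Fin 4 → ℕ, inW a → inW b → a + b = ![k0,k1,k2,k3] → a = 0 ∨ b = 0) :
    ![k0,k1,k2,k3] = ![1,1,0,0] ∨ ![k0,k1,k2,k3] = ![1,0,0,1] ∨
    ![k0,k1,k2,k3] = ![0,1,1,0] ∨ ![k0,k1,k2,k3] = ![0,0,1,1] ∨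
    ![k0,k1,k2,k3] = ![1,0,2,0] ∨ ![k0,k1,k2,k3] = ![0,1,0,2] ∨
    ![k0,k1,k2,k3] = ![0,2,0,1] ∨ ![k0,k1,k2,k3] = ![2,0,1,0] := by
  interval_cases k0 <;> interval_cases k1 <;> interval_cases k2 <;> interval_cases k3 <;>
  first
  | exact absurd hm (by unfold inW; decide)
  | exact absurd (by decide) hne
  | (first
    | exact Or.inl (by decide)
    | exact Or.inr (Or.inl (by decide))
    | exact Or.inr (Or.inr (Or.inl (by decide)))
    | exact Or.inr (Or.inr (Or.inr (Or.inl (by decide))))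
    | exact Or.inr (Or.inr (Or.inr (Or.inr (Or.inl (by decide)))))
    | exact Or.inr (Or.inr (Or.inr (Or.inr (Or.inr (Or.inl (by decide))))))
    | exact Or.inr (Or.inr (Or.inr (Or.inr (Or.inr (Or.inr (Or.inl (by decide)))))))
    | exact Or.inr (Or.inr (Or.inr (Or.inr (Or.inr (Or.inr (Or.inr (by decide))))))))
  | exact (not_indec ![0,0,1,1] ![0,0,1,1] (by unfold inW; decide) (by unfold inW; decide) (by decide) (by decide) (by decide) hind).elim
  | exact (not_indec ![0,1,1,0] ![0,0,1,1] (by unfold inW; decide) (by unfold inW; decide) (by decide) (by decide) (by decide) hind).elim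
  | exact (not_indec ![0,1,1,0] ![0,1,0,2] (by unfold inW; decide) (by unfold inW; decide) (by decide) (by decide) (by decide) hind).elim
  | exact (not_indec ![0,1,1,0] ![0,1,1,0] (by unfold inW; decide) (by unfold inW; decide) (by decide) (by decide) (by decide) hind).elim
  | exact (not_indec ![1,0,0,1] ![0,0,1,1] (by unfold inW; decide) (by unfold inW; decide) (by decide) (by decide) (by decide) hind).elim
  | exact (not_indec ![1,1,0,0] ![0,0,1,1] (by unfold inW; decide) (by unfold inW; decide) (by decide) (by decide) (by decide) hind).elim
  | exact (not_indec ![1,1,0,0] ![0,0,2,2] (by unfold inW; decide) (by unfold inW; decide) (by decide) (by decide) (by decide) hind).elim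
  | exact (not_indec ![1,1,0,0] ![0,1,0,2] (by unfold inW; decide) (by unfold inW; decide) (by decide) (by decide) (by decide) hind).elim
  | exact (not_indec ![1,1,0,0] ![0,1,1,0] (by unfold inW; decide) (by unfold inW; decide) (by decide) (by decide) (by decide) hind).elim
  | exact (not_indec ![1,1,0,0] ![0,1,2,1] (by unfold inW; decide) (by unfold inW; decide) (by decide) (by decide) (by decide) hind).elim
  | exact (not_indec ![1,0,0,1] ![1,0,0,1] (by unfold inW; decide) (by unfold inW; decide) (by decide) (by decide) (by decide) hind).elim
  | exact (not_indec ![1,0,0,1] ![1,0,2,0] (by unfold inW; decide) (by unfold inW; decide) (by decide) (by decide) (by decide) hind).elim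
  | exact (not_indec ![1,1,0,0] ![1,0,0,1] (by unfold inW; decide) (by unfold inW; decide) (by decide) (by decide) (by decide) hind).elim
  | exact (not_indec ![1,1,0,0] ![1,0,1,2] (by unfold inW; decide) (by unfold inW; decide) (by decide) (by decide) (by decide) hind).elim
  | exact (not_indec ![1,1,0,0] ![1,0,2,0] (by unfold inW; decide) (by unfold inW; decide) (by decide) (by decide) (by decide) hind).elim
  | exact (not_indec ![1,1,0,0] ![1,1,0,0] (by unfold inW; decide) (by unfold inW; decide) (by decide) (by decide) (by decide) hind).elim
  | exact (not_indec ![1,1,0,0] ![1,1,1,1] (by unfold inW; decide) (by unfold inW; decide) (by decide) (by decide) (by decide) hind).elim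
  | exact (not_indec ![1,1,0,0] ![1,1,2,2] (by unfold inW; decide) (by unfold inW; decide) (by decide) (by decide) (by decide) hind).elim

lemma indec_of_listed (m : Fin 4 → ℕ)
    (hm : m = ![3,0,0,0] ∨ m = ![0,3,0,0] ∨ m = ![0,0,3,0] ∨ m = ![0,0,0,3] ∨
      m = ![1,1,0,0] ∨ m = ![1,0,0,1] ∨ m = ![0,1,1,0] ∨ m = ![0,0,1,1] ∨
      m = ![1,0,2,0] ∨ m = ![0,1,0,2] ∨ m = ![0,2,0,1] ∨ m = ![2,0,1,0]) :
    ∀ a b : Fin 4 → ℕ, inW a → inW b → a + b = m → a = 0 ∨ b = 0 := by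
  intro a b ha hb hab
  have e0 := congrFun hab 0
  have e1 := congrFun hab 1
  have e2 := congrFun hab 2
  have e3 := congrFun hab 3
  unfold inW at ha hb
  obtain ⟨x, hx⟩ := ha
  obtain ⟨y, hy⟩ := hb
  have key : (a 0 = 0 ∧ a 1 = 0 ∧ a 2 = 0 ∧ a 3 = 0) ∨
      (b 0 = 0 ∧ b 1 = 0 ∧ b 2 = 0 ∧ b 3 = 0) := by
    rcases hm with rfl|rfl|rfl|rfl|rfl|rfl|rfl|rfl|rfl|rfl|rfl|rfl <;>
      simp [Pi.add_apply] at e0 e1 e2 e3 <;> omega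
  rcases key with ⟨p,q,r,s⟩ | ⟨p,q,r,s⟩
  · left; funext i; fin_cases i <;> simp_all
  · right; funext i; fin_cases i <;> simp_all

/-- The Hilbert basis (set of indecomposable nonzero elements) of
`W = {(k₁,k₂,k₃,k₄) ∈ ℤ₊⁴ | k₁ + 2k₂ + k₃ + 2k₄ ≡ 0 mod 3}` consists of exactly the twelve
listed elements. -/
theorem hilbert_basis_W_E6 :
    {m : Fin 4 → ℕ | inW m ∧ m ≠ 0 ∧
        ∀ a b : Fin 4 → ℕ, inW a → inW b → a + b = m → a = 0 ∨ b = 0} =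
      {![3,0,0,0], ![0,3,0,0], ![0,0,3,0], ![0,0,0,3],
       ![1,1,0,0], ![1,0,0,1], ![0,1,1,0], ![0,0,1,1],
       ![1,0,2,0], ![0,1,0,2], ![0,2,0,1], ![2,0,1,0]} := by
  ext m
  simp only [Set.mem_setOf_eq, Set.mem_insert_iff, Set.mem_singleton_iff]
  constructor
  · rintro ⟨hm, hne, hind⟩
    by_cases h0 : 3 ≤ m 0
    · have hb : inW (m - ![3,0,0,0]) := by
        unfold inW at hm ⊢
        obtain ⟨x, hx⟩ := hm
        show 3 ∣ (m 0 - 3) + 2 * (m 1 - 0) + (m 2 - 0) + 2 * (m 3 - 0)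
        omega
      have hab : ![3,0,0,0] + (m - ![3,0,0,0]) = m := by
        funext j
        fin_cases j
        · show 3 + (m 0 - 3) = m 0; omega
        · show 0 + (m 1 - 0) = m 1; omega
        · show 0 + (m 2 - 0) = m 2; omega
        · show 0 + (m 3 - 0) = m 3; omega
      rcases hind _ _ (by unfold inW; decide) hb hab with h | h
      · exact absurd h (by decide)
      · rw [h, add_zero] at hab
        rw [← hab]; tauto
    by_cases h1 : 3 ≤ m 1
    · have hb : inW (m - ![0,3,0,0]) := by
        unfold inW at hm ⊢
        obtain ⟨x, hx⟩ := hm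
        show 3 ∣ (m 0 - 0) + 2 * (m 1 - 3) + (m 2 - 0) + 2 * (m 3 - 0)
        omega
      have hab : ![0,3,0,0] + (m - ![0,3,0,0]) = m := by
        funext j
        fin_cases j
        · show 0 + (m 0 - 0) = m 0; omega
        · show 3 + (m 1 - 3) = m 1; omega
        · show 0 + (m 2 - 0) = m 2; omega
        · show 0 + (m 3 - 0) = m 3; omega
      rcases hind _ _ (by unfold inW; decide) hb hab with h | h
      · exact absurd h (by decide)
      · rw [h, add_zero] at hab
        rw [← hab]; tauto
    by_cases h2 : 3 ≤ m 2
    · have hb : inW (m - ![0,0,3,0]) := by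
        unfold inW at hm ⊢
        obtain ⟨x, hx⟩ := hm
        show 3 ∣ (m 0 - 0) + 2 * (m 1 - 0) + (m 2 - 3) + 2 * (m 3 - 0)
        omega
      have hab : ![0,0,3,0] + (m - ![0,0,3,0]) = m := by
        funext j
        fin_cases j
        · show 0 + (m 0 - 0) = m 0; omega
        · show 0 + (m 1 - 0) = m 1; omega
        · show 3 + (m 2 - 3) = m 2; omega
        · show 0 + (m 3 - 0) = m 3; omega
      rcases hind _ _ (by unfold inW; decide) hb hab with h | h
      · exact absurd h (by decide)
      · rw [h, add_zero] at hab
        rw [← hab]; tauto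
    by_cases h3 : 3 ≤ m 3
    · have hb : inW (m - ![0,0,0,3]) := by
        unfold inW at hm ⊢
        obtain ⟨x, hx⟩ := hm
        show 3 ∣ (m 0 - 0) + 2 * (m 1 - 0) + (m 2 - 0) + 2 * (m 3 - 3)
        omega
      have hab : ![0,0,0,3] + (m - ![0,0,0,3]) = m := by
        funext j
        fin_cases j
        · show 0 + (m 0 - 0) = m 0; omega
        · show 0 + (m 1 - 0) = m 1; omega
        · show 0 + (m 2 - 0) = m 2; omega
        · show 3 + (m 3 - 3) = m 3; omega
      rcases hind _ _ (by unfold inW; decide) hb hab with h | h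
      · exact absurd h (by decide)
      · rw [h, add_zero] at hab
        rw [← hab]; tauto
    push_neg at h0 h1 h2 h3
    have hme : m = ![m 0, m 1, m 2, m 3] := by
      funext i; fin_cases i <;> rfl
    rw [hme] at hm hne hind
    have hsmall := small_case (m 0) (m 1) (m 2) (m 3) (by omega) (by omega) (by omega)
      (by omega) hm hne hind
    rw [hme]
    tauto
  · intro hm
    refine ⟨?_, ?_, indec_of_listed m hm⟩
    · rcases hm with rfl|rfl|rfl|rfl|rfl|rfl|rfl|rfl|rfl|rfl|rfl|rfl <;> (unfold inW; decide)
    · rcases hm with rfl|rfl|rfl|rfl|rfl|rfl|rfl|rfl|rfl|rfl|rfl|rfl <;> decide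
end
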